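/- arXiv:2410.22653 — 4 statements merged into one kernel-verified Lean document; each statement's English description precedes it below -/
import Mathlib

section
/- Let x° be feasible for the IP and suppose x°_B > 0 componentwise for a feasible basis B of the LP relaxation. Then every d in the inverse-feasible region of the LP relaxation with respect to x° is also in the inverse-feasible region of G^B with respect to x°; i.e., IFR(LP, x°) ⊆ IFR(G^B, x°). -/
/-- If `x°` is feasible for the IP and `x°_B > 0` componentwise for a
feasible basis `B` (range of `β`) of the LP relaxation, then every `d` making `x°`
optimal for the LP relaxation also makes `x°` optimal for the GCR `G^B`;
i.e. `IFR(LP, x°) ⊆ IFR(G^B, x°)`. -/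
theorem ifr_lp_subset_ifr_gcr_of_pos_basic {m n : ℕ}
    (A : Matrix (Fin m) (Fin n) ℤ) (b : Fin m → ℤ)
    (β : Fin m → Fin n) (hβ : Function.Injective β)
    (AB : Matrix (Fin m) (Fin m) ℝ)
    (hABdef : AB = (A.map (Int.cast : ℤ → ℝ)).submatrix id β)
    (hAB : IsUnit AB.det)
    (hfeasbasis : ∀ i, 0 ≤ (AB⁻¹.mulVec (fun i => (b i : ℝ))) i)
    (x₀ : Fin n → ℤ) (hx₀feas : A.mulVec x₀ = b) (hx₀nn : ∀ i, 0 ≤ x₀ i)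
    (hx₀pos : ∀ k ∈ Finset.image β Finset.univ, 0 < x₀ k)
    (d : Fin n → ℝ)
    (hLP : ∀ x : Fin n → ℝ,
      (A.map (Int.cast : ℤ → ℝ)).mulVec x = (fun i => (b i : ℝ)) → (∀ i, 0 ≤ x i) →
      ∑ i, d i * (x₀ i : ℝ) ≤ ∑ i, d i * x i) :
    ∀ x : Fin n → ℤ, A.mulVec x = b →
      (∀ i ∉ Finset.image β Finset.univ, 0 ≤ x i) →
      ∑ i, d i * (x₀ i : ℝ) ≤ ∑ i, d i * (x i : ℝ) := by
  intro x hxfeas hxnn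
  set S : ℝ := ∑ i, |((x i : ℝ) - (x₀ i : ℝ))| with hS
  have hSnn : 0 ≤ S :=
    Finset.sum_nonneg fun i _ => abs_nonneg ((x i : ℝ) - (x₀ i : ℝ))
  set ε : ℝ := 1 / (1 + S) with hε
  have hεpos : 0 < ε := by positivity
  have hεle : ε ≤ 1 := by
    rw [hε, div_le_one (by linarith)]; linarith
  have hεS : ε * S ≤ 1 - ε := by
    have h1 : ε * (1 + S) = 1 := by
      rw [hε]; field_simp
    nlinarith
  set y : Fin n → ℝ := fun i => (x₀ i : ℝ) + ε * ((x i : ℝ) - (x₀ i : ℝ)) with hy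
  have expand : ∀ (c : Fin n → ℝ), ∑ j, c j * y j
      = (∑ j, c j * (x₀ j : ℝ)) + ε * ((∑ j, c j * (x j : ℝ)) - ∑ j, c j * (x₀ j : ℝ)) := by
    intro c
    rw [mul_sub, Finset.mul_sum, Finset.mul_sum, ← Finset.sum_sub_distrib,
      ← Finset.sum_add_distrib]
    exact Finset.sum_congr rfl fun j _ => by simp only [hy]; ring
  have hyfeas : (A.map (Int.cast : ℤ → ℝ)).mulVec y = (fun i => (b i : ℝ)) := by
    funext i
    have h0 : ∑ j, (A i j : ℝ) * (x₀ j : ℝ) = (b i : ℝ) := by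
      have h := congrFun hx₀feas i
      simp only [Matrix.mulVec, dotProduct] at h
      exact_mod_cast h
    have h1 : ∑ j, (A i j : ℝ) * (x j : ℝ) = (b i : ℝ) := by
      have h := congrFun hxfeas i
      simp only [Matrix.mulVec, dotProduct] at h
      exact_mod_cast h
    simp only [Matrix.mulVec, dotProduct, Matrix.map_apply]
    rw [expand (fun j => (A i j : ℝ)), h0, h1]
    ring
  have hynn : ∀ i, 0 ≤ y i := by
    intro i
    by_cases hi : i ∈ Finset.image β Finset.univ
    · have hx₀i : (1 : ℝ) ≤ (x₀ i : ℝ) := by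
        exact_mod_cast hx₀pos i hi
      have habs : |((x i : ℝ) - (x₀ i : ℝ))| ≤ S := by
        rw [hS]
        exact Finset.single_le_sum
          (f := fun j => |((x j : ℝ) - (x₀ j : ℝ))|)
          (fun j _ => abs_nonneg _) (Finset.mem_univ i)
      have hub : ε * |((x i : ℝ) - (x₀ i : ℝ))| ≤ 1 - ε :=
        le_trans (mul_le_mul_of_nonneg_left habs hεpos.le) hεS
      have hlb := neg_abs_le ((x i : ℝ) - (x₀ i : ℝ))
      simp only [hy]
      nlinarith
    · have h1 : (0 : ℝ) ≤ (x₀ i : ℝ) := by exact_mod_cast hx₀nn i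
      have h2 : (0 : ℝ) ≤ (x i : ℝ) := by exact_mod_cast hxnn i hi
      simp only [hy]
      nlinarith
  have hkey := hLP y hyfeas hynn
  rw [expand d] at hkey
  nlinarith
end

section
/- (Corollary) For a feasible IP solution x° and feasible bases ℬ of the LP relaxation: inf{‖d − c‖_p : d ∈ IFR(LP, x°)} ≥ min_{B∈ℬ} inf{‖d − c‖_p : d ∈ IFR(G^B, x°)} ≥ inf{‖d − c‖_p : d ∈ IFR(IP, x°)}. -/
namespace InverseGCR

variable {m n : ℕ}

/-- Feasibility for the IP `min{dᵀx : Ax = b, x ≥ 0, x ∈ ℤⁿ}`. -/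
def IPfeas (A : Matrix (Fin m) (Fin n) ℤ) (b : Fin m → ℤ) (x : Fin n → ℤ) : Prop :=
  A.mulVec x = b ∧ ∀ i, 0 ≤ x i

/-- Feasibility for the Gomory corner relaxation at basis `β` (nonnegativity dropped
on basic variables). -/
def Gfeas (A : Matrix (Fin m) (Fin n) ℤ) (b : Fin m → ℤ) (β : Fin m → Fin n)
    (x : Fin n → ℤ) : Prop :=
  A.mulVec x = b ∧ ∀ i ∉ Finset.image β Finset.univ, 0 ≤ x i

/-- Feasibility for the LP relaxation. -/
def LPfeas (A : Matrix (Fin m) (Fin n) ℤ) (b : Fin m → ℤ) (x : Fin n → ℝ) : Prop :=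
  (A.map (Int.cast : ℤ → ℝ)).mulVec x = (fun i => (b i : ℝ)) ∧ ∀ i, 0 ≤ x i

def obj (d : Fin n → ℝ) (x : Fin n → ℝ) : ℝ := ∑ i, d i * x i

def objZ (d : Fin n → ℝ) (x : Fin n → ℤ) : ℝ := ∑ i, d i * (x i : ℝ)

/-- The real basis matrix `A_B`. -/
def ABR (A : Matrix (Fin m) (Fin n) ℤ) (β : Fin m → Fin n) : Matrix (Fin m) (Fin m) ℝ :=
  (A.map (Int.cast : ℤ → ℝ)).submatrix id β

/-- `β` is a feasible basis of the LP relaxation: injective, nonsingular `A_B`,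
and `A_B⁻¹ b ≥ 0`. -/
def FeasBasis (A : Matrix (Fin m) (Fin n) ℤ) (b : Fin m → ℤ) (β : Fin m → Fin n) : Prop :=
  Function.Injective β ∧ IsUnit (ABR A β).det ∧
    ∀ i, 0 ≤ ((ABR A β)⁻¹.mulVec (fun i => (b i : ℝ))) i

/-- The reduced cost `d̄_j = d_j − d_Bᵀ A_B⁻¹ A_j` at basis `β` under objective `d`. -/
noncomputable def redCost (A : Matrix (Fin m) (Fin n) ℤ) (d : Fin n → ℝ) (β : Fin m → Fin n)
    (j : Fin n) : ℝ :=
  d j - dotProduct (Matrix.vecMul (fun i => d (β i)) (ABR A β)⁻¹)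
    (fun i => (A i j : ℝ))

/-- Inverse-feasible region of the LP relaxation w.r.t. `x₀`. -/
def IFR_LP (A : Matrix (Fin m) (Fin n) ℤ) (b : Fin m → ℤ) (x₀ : Fin n → ℤ) :
    Set (Fin n → ℝ) :=
  {d | ∀ x : Fin n → ℝ, LPfeas A b x → objZ d x₀ ≤ obj d x}

/-- Inverse-feasible region of the GCR at basis `β` w.r.t. `x₀`. -/
def IFR_G (A : Matrix (Fin m) (Fin n) ℤ) (b : Fin m → ℤ) (β : Fin m → Fin n)
    (x₀ : Fin n → ℤ) : Set (Fin n → ℝ) :=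
  {d | ∀ x : Fin n → ℤ, Gfeas A b β x → objZ d x₀ ≤ objZ d x}

/-- Inverse-feasible region of the IP w.r.t. `x₀`. -/
def IFR_IP (A : Matrix (Fin m) (Fin n) ℤ) (b : Fin m → ℤ) (x₀ : Fin n → ℤ) :
    Set (Fin n → ℝ) :=
  {d | ∀ x : Fin n → ℤ, IPfeas A b x → objZ d x₀ ≤ objZ d x}


/-- The optimal value of the inverse problem `min{‖d − c‖ : d ∈ S}` (as an `EReal`
infimum; `⊤` if `S` is empty). -/
noncomputable def invVal (S : Set (Fin n → ℝ)) (c : Fin n → ℝ) : EReal :=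
  sInf ((fun d => ((‖d - c‖ : ℝ) : EReal)) '' S)

/-!
The second inequality holds because each corner relaxation `G^B` relaxes the IP, so
`IFR(G^B, x°) ⊆ IFR(IP, x°)`. For the first, take `d ∈ IFR(LP, x°)`: then `x°` is LP-optimal
for `d`, and the LP has an optimal basis `B`, i.e. a feasible basis with nonnegative reduced
costs `d̄`. Since `dᵀx = d̄ᵀx + d_Bᵀ A_B⁻¹ b` whenever `Ax = b`, and `d̄` vanishes on `B`, the
basic solution of `B` is optimal over the corner polyhedron of `B`; hence `d ∈ IFR(G^B, x°)`.

The optimal basis comes from perturbing `b` to `b + A_{B₀} (ε, ε², …, εᵐ)`, which makes the LP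
nondegenerate for small `ε > 0`. There an optimal basic solution exists by support reduction,
and nondegeneracy forces its reduced costs to be nonnegative. Finitely many bases occur, so
one of them is optimal for arbitrarily small `ε`, and it stays feasible in the limit `ε → 0`.
-/

open Matrix Filter Topology

theorem injective_of_isUnit_det_submatrix {κ ι R : Type*} [Fintype κ] [DecidableEq κ]
    [CommRing R] [Nontrivial R] {M : Matrix κ ι R} {β : κ → ι}
    (h : IsUnit (M.submatrix id β).det) : Function.Injective β := by
  intro i j hij
  by_contra hne
  exact not_isUnit_zero (det_zero_of_column_eq (M := M.submatrix id β) hne (by simp [hij]) ▸ h)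

theorem dotProduct_extend_zero {κ ι R : Type*} [Fintype κ] [Fintype ι] [NonUnitalNonAssocSemiring R]
    {β : κ → ι} (hβ : Function.Injective β) (w : ι → R) (z : κ → R) :
    w ⬝ᵥ Function.extend β z 0 = (w ∘ β) ⬝ᵥ z :=
  (Fintype.sum_of_injective β hβ _ _
    (fun j hj => by simp [Function.extend_apply' _ _ _ hj])
    (fun i => by simp [hβ.extend_apply])).symm

theorem mulVec_extend_zero {κ ι R : Type*} [Fintype κ] [Fintype ι]
    [NonUnitalNonAssocSemiring R] (M : Matrix κ ι R) {β : κ → ι} (hβ : Function.Injective β)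
    (z : κ → R) : M *ᵥ Function.extend β z 0 = M.submatrix id β *ᵥ z :=
  funext fun i => dotProduct_extend_zero hβ (M i) z

section BasicSolution

variable {ι : Type*} (M : Matrix (Fin m) ι ℝ)

noncomputable def basicSol (β : Fin m → ι) (v : Fin m → ℝ) : ι → ℝ :=
  Function.extend β ((M.submatrix id β)⁻¹ *ᵥ v) 0

def IsFeasibleBasis (b : Fin m → ℝ) (β : Fin m → ι) : Prop :=
  IsUnit (M.submatrix id β).det ∧ 0 ≤ (M.submatrix id β)⁻¹ *ᵥ b

noncomputable def reducedCost (d : ι → ℝ) (β : Fin m → ι) : ι → ℝ :=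
  d - ((d ∘ β) ᵥ* (M.submatrix id β)⁻¹) ᵥ* M

variable {M} {β : Fin m → ι}

theorem basicSol_apply (hβ : IsUnit (M.submatrix id β).det) (v : Fin m → ℝ) (i : Fin m) :
    basicSol M β v (β i) = ((M.submatrix id β)⁻¹ *ᵥ v) i :=
  (injective_of_isUnit_det_submatrix hβ).extend_apply _ _ i

theorem basicSol_apply_of_notMem_range (v : Fin m → ℝ) {j : ι} (hj : j ∉ Set.range β) :
    basicSol M β v j = 0 :=
  Function.extend_apply' _ _ _ hj

theorem IsFeasibleBasis.basicSol_nonneg {b : Fin m → ℝ} (h : IsFeasibleBasis M b β) :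
    0 ≤ basicSol M β b := by
  intro j
  by_cases hj : j ∈ Set.range β
  · obtain ⟨i, rfl⟩ := hj
    rw [basicSol_apply h.1]
    exact h.2 i
  · rw [basicSol_apply_of_notMem_range b hj]
    exact le_rfl

theorem reducedCost_apply_basic (hβ : IsUnit (M.submatrix id β).det) (d : ι → ℝ) (i : Fin m) :
    reducedCost M d β (β i) = 0 := by
  have hprice : (((d ∘ β) ᵥ* (M.submatrix id β)⁻¹) ᵥ* M) (β i) = d (β i) := by
    change (((d ∘ β) ᵥ* (M.submatrix id β)⁻¹) ᵥ* M.submatrix id β) i = _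
    rw [vecMul_vecMul, nonsing_inv_mul _ hβ, vecMul_one, Function.comp_apply]
  rw [reducedCost, Pi.sub_apply, hprice, sub_self]

variable [Fintype ι]

theorem mulVec_basicSol (hβ : IsUnit (M.submatrix id β).det) (v : Fin m → ℝ) :
    M *ᵥ basicSol M β v = v := by
  rw [basicSol, mulVec_extend_zero M (injective_of_isUnit_det_submatrix hβ), mulVec_mulVec,
    mul_nonsing_inv _ hβ, one_mulVec]

theorem dotProduct_basicSol (hβ : IsUnit (M.submatrix id β).det) (w : ι → ℝ) (v : Fin m → ℝ) :
    w ⬝ᵥ basicSol M β v = (w ∘ β) ⬝ᵥ ((M.submatrix id β)⁻¹ *ᵥ v) :=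
  dotProduct_extend_zero (injective_of_isUnit_det_submatrix hβ) w _

theorem reducedCost_dotProduct_basicSol (hβ : IsUnit (M.submatrix id β).det) (d : ι → ℝ)
    (v : Fin m → ℝ) : reducedCost M d β ⬝ᵥ basicSol M β v = 0 := by
  have hzero : reducedCost M d β ∘ β = 0 := funext (reducedCost_apply_basic hβ d)
  rw [dotProduct_basicSol hβ, hzero, zero_dotProduct]

theorem basicSol_eq_of_support_subset (hβ : IsUnit (M.submatrix id β).det) {x : ι → ℝ}
    (hx : Function.support x ⊆ Set.range β) : basicSol M β (M *ᵥ x) = x := by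
  have hβinj := injective_of_isUnit_det_submatrix hβ
  have hext : Function.extend β (x ∘ β) 0 = x := by
    funext j
    by_cases hj : j ∈ Set.range β
    · obtain ⟨i, rfl⟩ := hj
      exact hβinj.extend_apply _ _ i
    · rw [Function.extend_apply' _ _ _ hj]
      exact (Function.notMem_support.1 (mt (@hx j) hj)).symm
  calc basicSol M β (M *ᵥ x) = Function.extend β (x ∘ β) 0 := by
        conv_lhs => rw [← hext]
        rw [basicSol, mulVec_extend_zero M hβinj, mulVec_mulVec, nonsing_inv_mul _ hβ, one_mulVec]
    _ = x := hext

theorem dotProduct_eq_reducedCost_dotProduct_add (d : ι → ℝ) (β : Fin m → ι) (x : ι → ℝ) :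
    d ⬝ᵥ x = reducedCost M d β ⬝ᵥ x + ((d ∘ β) ᵥ* (M.submatrix id β)⁻¹) ⬝ᵥ (M *ᵥ x) := by
  rw [reducedCost, sub_dotProduct, dotProduct_mulVec, sub_add_cancel]

theorem dotProduct_basicSol_le_of_reducedCost_nonneg (hβ : IsUnit (M.submatrix id β).det)
    {d : ι → ℝ} (hrc : 0 ≤ reducedCost M d β) {x : ι → ℝ}
    (hx : ∀ j ∉ Set.range β, 0 ≤ x j) : d ⬝ᵥ basicSol M β (M *ᵥ x) ≤ d ⬝ᵥ x := by
  have hnonneg : 0 ≤ reducedCost M d β ⬝ᵥ x := by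
    refine Finset.sum_nonneg fun j _ => ?_
    by_cases hj : j ∈ Set.range β
    · obtain ⟨i, rfl⟩ := hj
      simp [reducedCost_apply_basic hβ]
    · exact mul_nonneg (hrc j) (hx j hj)
  rw [dotProduct_eq_reducedCost_dotProduct_add d β x,
    dotProduct_eq_reducedCost_dotProduct_add d β (basicSol M β _), mulVec_basicSol hβ,
    reducedCost_dotProduct_basicSol hβ, zero_add]
  exact le_add_of_nonneg_left hnonneg

end BasicSolution

section ExistenceOfBases

variable {ι : Type*}

theorem exists_isUnit_det_submatrix_of_linearIndepOn {M : Matrix (Fin m) ι ℝ}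
    (hspan : Submodule.span ℝ (Set.range M.col) = ⊤) {s : Set ι}
    (hs : LinearIndepOn ℝ M.col s) :
    ∃ β : Fin m → ι, IsUnit (M.submatrix id β).det ∧ s ⊆ Set.range β := by
  obtain ⟨t, -, hst, htspan, ht⟩ := exists_linearIndepOn_extension hs (Set.subset_univ s)
  have htop : ⊤ ≤ Submodule.span ℝ (Set.range fun j : t => M.col j) := by
    rw [← hspan, ← Set.image_univ, ← Set.image_eq_range]
    exact Submodule.span_le.2 htspan
  let e : t ≃ Fin m := (Module.Basis.mk ht htop).indexEquiv (Pi.basisFun ℝ (Fin m))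
  refine ⟨fun i => e.symm i, ?_, fun j hj => ⟨e ⟨j, hst hj⟩, by simp⟩⟩
  rw [← isUnit_iff_isUnit_det, ← linearIndependent_cols_iff_isUnit]
  exact ht.comp e.symm e.symm.injective

variable [Fintype ι]

theorem mulVec_eq_sum_smul_col {R : Type*} [CommSemiring R] {κ : Type*} (M : Matrix κ ι R)
    (u : ι → R) : M *ᵥ u = ∑ j, u j • M.col j := by
  rw [mulVec_eq_sum]
  simp only [op_smul_eq_smul, col]

theorem exists_mulVec_eq_zero_of_not_linearIndepOn {R : Type*} [CommRing R] {κ : Type*}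
    {M : Matrix κ ι R} {s : Set ι} (h : ¬LinearIndepOn R M.col s) :
    ∃ u : ι → R, M *ᵥ u = 0 ∧ u ≠ 0 ∧ Function.support u ⊆ s := by
  simp only [linearIndepOn_iff'', not_forall, exists_prop] at h
  obtain ⟨t, g, hts, hgt, hsum, i, -, hgi⟩ := h
  refine ⟨g, ?_, fun hg => hgi (congrFun hg i), fun j hj => hts ?_⟩
  · rw [mulVec_eq_sum_smul_col, ← hsum]
    exact (Finset.sum_subset t.subset_univ fun j _ hj => by simp [hgt j hj]).symm
  · by_contra hjt
    exact hj (hgt j hjt)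

theorem exists_nonneg_sub_smul_support_ssubset {𝕜 : Type*} [Field 𝕜] [LinearOrder 𝕜]
    [IsStrictOrderedRing 𝕜] {x u : ι → 𝕜} (hx : 0 ≤ x)
    (hu : Function.support u ⊆ Function.support x) {j₀ : ι} (hj₀ : 0 < u j₀) :
    ∃ t : 𝕜, 0 ≤ t ∧ 0 ≤ x - t • u ∧ Function.support (x - t • u) ⊂ Function.support x := by
  classical
  obtain ⟨j₁, hj₁, hmin⟩ := (Finset.univ.filter (0 < u ·)).exists_min_image
    (fun j => x j / u j) ⟨j₀, by simpa using hj₀⟩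
  simp only [Finset.mem_filter, Finset.mem_univ, true_and] at hj₁ hmin
  have ht : 0 ≤ x j₁ / u j₁ := div_nonneg (hx j₁) hj₁.le
  refine ⟨x j₁ / u j₁, ht, fun j => ?_, ?_⟩
  · simp only [Pi.zero_apply, Pi.sub_apply, Pi.smul_apply, smul_eq_mul, sub_nonneg]
    rcases le_or_gt (u j) 0 with h | h
    · exact (mul_nonpos_of_nonneg_of_nonpos ht h).trans (hx j)
    · exact (le_div_iff₀ h).1 (hmin j h)
  · refine (Set.ssubset_iff_of_subset fun j hj => ?_).2 ⟨j₁, hu hj₁.ne', ?_⟩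
    · by_contra hxj
      simp [Function.notMem_support.1 hxj, Function.notMem_support.1 (mt (@hu j) hxj)] at hj
    · simp [div_mul_cancel₀ _ hj₁.ne']

variable {M : Matrix (Fin m) ι ℝ} {d : ι → ℝ}

theorem exists_mulVec_eq_zero_dotProduct_nonneg (hrec : ∀ u, 0 ≤ u → M *ᵥ u = 0 → 0 ≤ d ⬝ᵥ u)
    {u : ι → ℝ} (hMu : M *ᵥ u = 0) (hu : u ≠ 0) :
    ∃ v, M *ᵥ v = 0 ∧ Function.support v = Function.support u ∧ 0 ≤ d ⬝ᵥ v ∧ ∃ j, 0 < v j := by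
  wlog hdu : 0 ≤ d ⬝ᵥ u generalizing u
  · obtain ⟨v, hv⟩ := this (u := -u) (by rw [mulVec_neg, hMu, neg_zero]) (neg_ne_zero.2 hu)
      (by rw [dotProduct_neg]; linarith)
    exact ⟨v, by rwa [Function.support_neg] at hv⟩
  by_cases hpos : ∃ j, 0 < u j
  · exact ⟨u, hMu, rfl, hdu, hpos⟩
  push Not at hpos
  obtain ⟨j, hj⟩ := Function.ne_iff.1 hu
  refine ⟨-u, by rw [mulVec_neg, hMu, neg_zero], Function.support_neg u,
    hrec _ (fun i => neg_nonneg.2 (hpos i)) (by rw [mulVec_neg, hMu, neg_zero]),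
    j, neg_pos.2 ((hpos j).lt_of_ne hj)⟩

theorem exists_isFeasibleBasis_dotProduct_basicSol_le
    (hspan : Submodule.span ℝ (Set.range M.col) = ⊤)
    (hrec : ∀ u, 0 ≤ u → M *ᵥ u = 0 → 0 ≤ d ⬝ᵥ u) {x : ι → ℝ} (hx : 0 ≤ x) :
    ∃ β, IsFeasibleBasis M (M *ᵥ x) β ∧ d ⬝ᵥ basicSol M β (M *ᵥ x) ≤ d ⬝ᵥ x := by
  induction hk : (Function.support x).ncard using Nat.strong_induction_on generalizing x with
  | _ k ih =>
  by_cases hind : LinearIndepOn ℝ M.col (Function.support x)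
  · obtain ⟨β, hβ, hsub⟩ := exists_isUnit_det_submatrix_of_linearIndepOn hspan hind
    have hsol := basicSol_eq_of_support_subset hβ hsub
    refine ⟨β, ⟨hβ, fun i => ?_⟩, by rw [hsol]⟩
    rw [← basicSol_apply hβ, hsol]
    exact hx _
  obtain ⟨u, hMu, hu0, husupp⟩ := exists_mulVec_eq_zero_of_not_linearIndepOn hind
  obtain ⟨v, hMv, hvsupp, hdv, j, hj⟩ := exists_mulVec_eq_zero_dotProduct_nonneg hrec hMu hu0
  obtain ⟨t, ht, hxt, hssub⟩ :=
    exists_nonneg_sub_smul_support_ssubset hx (hvsupp ▸ husupp) hj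
  have hMxt : M *ᵥ (x - t • v) = M *ᵥ x := by
    rw [mulVec_sub, mulVec_smul, hMv, smul_zero, sub_zero]
  obtain ⟨β, hβ, hle⟩ := ih _ (hk ▸ Set.ncard_lt_ncard hssub (Set.toFinite _)) hxt rfl
  rw [hMxt] at hβ hle
  refine ⟨β, hβ, hle.trans ?_⟩
  rw [dotProduct_sub, dotProduct_smul, smul_eq_mul, sub_le_self_iff]
  exact mul_nonneg ht hdv

theorem exists_isFeasibleBasis_forall_dotProduct_basicSol_le
    (hspan : Submodule.span ℝ (Set.range M.col) = ⊤)
    (hrec : ∀ u, 0 ≤ u → M *ᵥ u = 0 → 0 ≤ d ⬝ᵥ u) {x₁ : ι → ℝ} (hx₁ : 0 ≤ x₁) :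
    ∃ β, IsFeasibleBasis M (M *ᵥ x₁) β ∧
      ∀ x, 0 ≤ x → M *ᵥ x = M *ᵥ x₁ → d ⬝ᵥ basicSol M β (M *ᵥ x₁) ≤ d ⬝ᵥ x := by
  obtain ⟨β₁, hβ₁, -⟩ := exists_isFeasibleBasis_dotProduct_basicSol_le hspan hrec hx₁
  obtain ⟨β, hβ, hmin⟩ := Set.exists_min_image {β | IsFeasibleBasis M (M *ᵥ x₁) β}
    (fun β => d ⬝ᵥ basicSol M β (M *ᵥ x₁)) (Set.toFinite _) ⟨β₁, hβ₁⟩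
  refine ⟨β, hβ, fun x hx hMx => ?_⟩
  obtain ⟨β', hβ', hle⟩ := exists_isFeasibleBasis_dotProduct_basicSol_le hspan hrec hx
  rw [hMx] at hβ' hle
  exact (hmin β' hβ').trans hle

end ExistenceOfBases

section Optimality

variable {ι : Type*} [Fintype ι]

theorem eventually_nonneg_add_smul {x w : ι → ℝ} (hx : 0 ≤ x) (hw : ∀ j, x j = 0 → 0 ≤ w j) :
    ∀ᶠ t in 𝓝[>] (0 : ℝ), 0 ≤ x + t • w := by
  simp only [Pi.le_def, Filter.eventually_all]
  intro j
  rcases (hx j).eq_or_lt with h | h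
  · filter_upwards [self_mem_nhdsWithin] with t (ht : 0 < t)
    simpa [← h] using mul_nonneg ht.le (hw j h.symm)
  · have hcont : Tendsto (fun t : ℝ => x j + t * w j) (𝓝 0) (𝓝 (x j)) := by
      simpa using (show Continuous fun t : ℝ => x j + t * w j by fun_prop).tendsto 0
    filter_upwards [nhdsWithin_le_nhds (hcont.eventually (lt_mem_nhds h))] with t ht
    simpa using ht.le

theorem reducedCost_nonneg_of_forall_dotProduct_basicSol_le {M : Matrix (Fin m) ι ℝ}
    {β : Fin m → ι} {b : Fin m → ℝ} {d : ι → ℝ} (hβ : IsUnit (M.submatrix id β).det)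
    (hpos : ∀ i, 0 < ((M.submatrix id β)⁻¹ *ᵥ b) i)
    (hopt : ∀ x, 0 ≤ x → M *ᵥ x = b → d ⬝ᵥ basicSol M β b ≤ d ⬝ᵥ x) :
    0 ≤ reducedCost M d β := by
  classical
  intro j
  -- The simplex edge direction bringing `j` into the basis; nondegeneracy makes small steps
  -- along it feasible.
  set w := Pi.single j 1 - basicSol M β (M.col j)
  have hMw : M *ᵥ w = 0 := by
    rw [mulVec_sub, mulVec_basicSol hβ, mulVec_single_one, sub_eq_zero]
  have hdw : d ⬝ᵥ w = reducedCost M d β j := by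
    rw [dotProduct_eq_reducedCost_dotProduct_add d β w, hMw, dotProduct_zero, add_zero,
      dotProduct_sub, reducedCost_dotProduct_basicSol hβ, sub_zero, dotProduct_single, mul_one]
  have hx : 0 ≤ basicSol M β b := IsFeasibleBasis.basicSol_nonneg ⟨hβ, fun i => (hpos i).le⟩
  have hw : ∀ k, basicSol M β b k = 0 → 0 ≤ w k := by
    intro k hk
    have hk' : k ∉ Set.range β := by
      rintro ⟨i, rfl⟩
      exact (hpos i).ne' (basicSol_apply hβ b i ▸ hk)
    simp only [w, Pi.sub_apply, basicSol_apply_of_notMem_range _ hk', sub_zero]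
    exact (Pi.single_nonneg.2 zero_le_one : (0 : ι → ℝ) ≤ Pi.single j 1) k
  obtain ⟨t, ht, ht0⟩ := ((eventually_nonneg_add_smul hx hw).and self_mem_nhdsWithin).exists
  have hle := hopt _ ht (by rw [mulVec_add, mulVec_smul, hMw, smul_zero, add_zero,
    mulVec_basicSol hβ])
  rw [dotProduct_add, dotProduct_smul, hdw, smul_eq_mul, le_add_iff_nonneg_right] at hle
  exact (mul_nonneg_iff_of_pos_left ht0).1 hle

end Optimality

section Perturbation

open Polynomial in
theorem eventually_add_sum_mul_pow_ne_zero (c : ℝ) {r : Fin m → ℝ} (hr : r ≠ 0) :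
    ∀ᶠ ε in 𝓝[≠] (0 : ℝ), c + ∑ k, r k * ε ^ ((k : ℕ) + 1) ≠ 0 := by
  set p : ℝ[X] := C c + ∑ k, C (r k) * X ^ ((k : ℕ) + 1)
  have hp : p ≠ 0 := by
    obtain ⟨k, hk⟩ := Function.ne_iff.1 hr
    intro h0
    have := congrArg (coeff · ((k : ℕ) + 1)) h0
    simp [p, Fin.val_inj] at this
    exact hk this
  filter_upwards [nhdsNE_of_nhdsNE_sdiff_finite univ_mem (p.finite_setOfPred_isRoot hp)]
    with ε hε
  simpa [p, eval_finsetSum] using hε.2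

variable {ι : Type*} {M : Matrix (Fin m) ι ℝ}

variable (M) in
noncomputable def perturbedRHS (β₀ : Fin m → ι) (b : Fin m → ℝ) (ε : ℝ) : Fin m → ℝ :=
  b + M.submatrix id β₀ *ᵥ fun k => ε ^ ((k : ℕ) + 1)

theorem isFeasibleBasis_perturbedRHS {β₀ : Fin m → ι} {b : Fin m → ℝ}
    (h : IsFeasibleBasis M b β₀) {ε : ℝ} (hε : 0 < ε) :
    IsFeasibleBasis M (perturbedRHS M β₀ b ε) β₀ := by
  refine ⟨h.1, fun i => ?_⟩
  rw [perturbedRHS, mulVec_add, mulVec_mulVec, nonsing_inv_mul _ h.1, one_mulVec]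
  exact add_nonneg (h.2 i) (pow_pos hε _).le

theorem eventually_mulVec_perturbedRHS_ne_zero {β₀ β : Fin m → ι}
    (hβ₀ : IsUnit (M.submatrix id β₀).det) (hβ : IsUnit (M.submatrix id β).det)
    (b : Fin m → ℝ) :
    ∀ᶠ ε in 𝓝[>] (0 : ℝ), ∀ i, ((M.submatrix id β)⁻¹ *ᵥ perturbedRHS M β₀ b ε) i ≠ 0 := by
  set N := (M.submatrix id β)⁻¹ * M.submatrix id β₀
  have hN : IsUnit N.det := by
    rw [det_mul]
    exact (isUnit_nonsing_inv_det _ hβ).mul hβ₀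
  refine eventually_all.2 fun i => nhdsGT_le_nhdsNE 0 ?_
  have hrow : N i ≠ 0 := fun h0 => hN.ne_zero (det_eq_zero_of_row_eq_zero i (congrFun h0))
  filter_upwards [eventually_add_sum_mul_pow_ne_zero (((M.submatrix id β)⁻¹ *ᵥ b) i) hrow]
    with ε hε
  rwa [perturbedRHS, mulVec_add, mulVec_mulVec]

theorem tendsto_perturbedRHS (β₀ : Fin m → ι) (b : Fin m → ℝ) :
    Tendsto (perturbedRHS M β₀ b) (𝓝 0) (𝓝 b) := by
  have hcont : Continuous (perturbedRHS M β₀ b) := by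
    unfold perturbedRHS
    fun_prop
  simpa [perturbedRHS, ← Pi.zero_def] using hcont.tendsto 0

variable {d : ι → ℝ}

theorem exists_isFeasibleBasis_reducedCost_nonneg [Fintype ι]
    (hspan : Submodule.span ℝ (Set.range M.col) = ⊤)
    (hrec : ∀ u, 0 ≤ u → M *ᵥ u = 0 → 0 ≤ d ⬝ᵥ u) {x₀ : ι → ℝ} (hx₀ : 0 ≤ x₀) :
    ∃ β, IsFeasibleBasis M (M *ᵥ x₀) β ∧ 0 ≤ reducedCost M d β := by
  set b := M *ᵥ x₀
  obtain ⟨β₀, hβ₀, -⟩ := exists_isFeasibleBasis_dotProduct_basicSol_le hspan hrec hx₀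
  have hnd : ∀ᶠ ε in 𝓝[>] (0 : ℝ), ∀ β : Fin m → ι, IsUnit (M.submatrix id β).det →
      ∀ i, ((M.submatrix id β)⁻¹ *ᵥ perturbedRHS M β₀ b ε) i ≠ 0 := by
    refine eventually_all.2 fun β => ?_
    by_cases hβ : IsUnit (M.submatrix id β).det
    · exact (eventually_mulVec_perturbedRHS_ne_zero hβ₀.1 hβ b).mono fun _ h _ => h
    · exact Eventually.of_forall fun _ h => absurd h hβ
  have hgood : ∀ᶠ ε in 𝓝[>] (0 : ℝ), ∃ β,
      IsFeasibleBasis M (perturbedRHS M β₀ b ε) β ∧ 0 ≤ reducedCost M d β := by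
    filter_upwards [hnd, self_mem_nhdsWithin] with ε hnd (hε : 0 < ε)
    have hfeas₀ := isFeasibleBasis_perturbedRHS hβ₀ hε
    obtain ⟨β, hβ, hopt⟩ :=
      exists_isFeasibleBasis_forall_dotProduct_basicSol_le hspan hrec hfeas₀.basicSol_nonneg
    rw [mulVec_basicSol hfeas₀.1] at hβ hopt
    exact ⟨β, hβ, reducedCost_nonneg_of_forall_dotProduct_basicSol_le hβ.1
      (fun i => (hβ.2 i).lt_of_ne (hnd β hβ.1 i).symm) hopt⟩
  obtain ⟨β, hβ⟩ := frequently_exists.1 hgood.frequently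
  obtain ⟨ε, hε, hrc⟩ := hβ.exists
  refine ⟨β, ⟨hε.1, Set.mem_Ici.1 <|
    isClosed_Ici.mem_of_frequently_of_tendsto (hβ.mono fun _ h => h.1.2) ?_⟩, hrc⟩
  exact ((continuous_const.matrix_mulVec continuous_id).tendsto _).comp
    ((tendsto_perturbedRHS β₀ b).mono_left nhdsWithin_le_nhds)

end Perturbation

section IntegerProgram

theorem mulVec_map_intCast {R κ ι : Type*} [Ring R] [Fintype ι] (A : Matrix κ ι ℤ)
    (x : ι → ℤ) : A.map (Int.cast : ℤ → R) *ᵥ (fun j => (x j : R)) = fun i => ((A *ᵥ x) i : R) :=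
  funext fun i => ((Int.castRingHom R).map_mulVec A x i).symm

theorem span_col_map_intCast_eq_top {ι : Type*} [Fintype ι] {A : Matrix (Fin m) ι ℤ}
    (hrank : A.rank = m) : Submodule.span ℝ (Set.range (A.map (Int.cast : ℤ → ℝ)).col) = ⊤ := by
  set N := LinearMap.range A.mulVecLin
  set v : Fin m → Fin m → ℤ := fun k => Module.finBasis ℤ N (Fin.cast hrank.symm k)
  have hv : LinearIndependent ℤ v :=
    ((Module.finBasis ℤ N).linearIndependent.comp _ (Fin.cast_injective _)).map' N.subtype
      N.ker_subtype
  have hvR := (linearIndependent_algebraMap_comp_iff (S := ℝ)).2 hv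
  rw [← range_mulVecLin, eq_top_iff, ← hvR.span_eq_top_of_card_eq_finrank' (by simp),
    Submodule.span_le]
  rintro _ ⟨k, rfl⟩
  obtain ⟨x, hx⟩ := (Module.finBasis ℤ N (Fin.cast hrank.symm k)).2
  refine ⟨fun j => (x j : ℝ), ?_⟩
  rw [mulVecLin_apply, mulVec_map_intCast]
  funext i
  simp [v, ← hx]

theorem IFR_G_subset_IFR_IP (A : Matrix (Fin m) (Fin n) ℤ) (b : Fin m → ℤ) (β : Fin m → Fin n)
    (x₀ : Fin n → ℤ) : IFR_G A b β x₀ ⊆ IFR_IP A b x₀ :=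
  fun _ hd x hx => hd x ⟨hx.1, fun i _ => hx.2 i⟩

theorem IFR_LP_subset_iUnion_IFR_G (A : Matrix (Fin m) (Fin n) ℤ) (b : Fin m → ℤ)
    (hrank : A.rank = m) (x₀ : Fin n → ℤ) (hx₀ : IPfeas A b x₀) :
    IFR_LP A b x₀ ⊆ ⋃ β : {β : Fin m → Fin n // FeasBasis A b β}, IFR_G A b β.1 x₀ := by
  intro d hd
  set M := A.map (Int.cast : ℤ → ℝ)
  have hMx₀ : M *ᵥ (fun j => (x₀ j : ℝ)) = fun i => (b i : ℝ) := by
    rw [mulVec_map_intCast, hx₀.1]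
  have hx₀R : (0 : Fin n → ℝ) ≤ fun j => (x₀ j : ℝ) := fun j => Int.cast_nonneg (hx₀.2 j)
  have hrec : ∀ u, 0 ≤ u → M *ᵥ u = 0 → 0 ≤ d ⬝ᵥ u := by
    intro u hu hMu
    have hle := hd _ ⟨by rw [mulVec_add, hMu, add_zero, hMx₀], add_nonneg hx₀R hu⟩
    rwa [obj, ← dotProduct, dotProduct_add, objZ, ← dotProduct, le_add_iff_nonneg_right] at hle
  obtain ⟨β, hβ, hrc⟩ :=
    exists_isFeasibleBasis_reducedCost_nonneg (span_col_map_intCast_eq_top hrank) hrec hx₀R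
  rw [hMx₀] at hβ
  refine Set.mem_iUnion.2 ⟨⟨β, injective_of_isUnit_det_submatrix hβ.1, hβ⟩, fun x hx => ?_⟩
  have hxN : ∀ j ∉ Set.range β, (0 : ℝ) ≤ x j :=
    fun j hj => Int.cast_nonneg (hx.2 j (by simpa using hj))
  have hMx : M *ᵥ (fun j => (x j : ℝ)) = fun i => (b i : ℝ) := by
    rw [mulVec_map_intCast, hx.1]
  calc objZ d x₀ ≤ d ⬝ᵥ basicSol M β (fun i => (b i : ℝ)) :=
        hd _ ⟨mulVec_basicSol hβ.1 _, hβ.basicSol_nonneg⟩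
    _ ≤ objZ d x := hMx ▸ dotProduct_basicSol_le_of_reducedCost_nonneg hβ.1 hrc hxN

end IntegerProgram

theorem invVal_anti {S T : Set (Fin n → ℝ)} (h : S ⊆ T) (c : Fin n → ℝ) :
    invVal T c ≤ invVal S c :=
  sInf_le_sInf (Set.image_mono h)

theorem invVal_iUnion {κ : Sort*} (S : κ → Set (Fin n → ℝ)) (c : Fin n → ℝ) :
    invVal (⋃ i, S i) c = ⨅ i, invVal (S i) c := by
  simp only [invVal, sInf_image, iInf_iUnion]

/-- For a feasible IP solution `x°` and the set `ℬ` of feasible LP bases,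
`val(INV(LP, x°)) ≥ min_{B ∈ ℬ} val(INV(G^B, x°)) ≥ val(INV(IP, x°))`. -/
theorem inv_lp_ge_min_inv_gcr_ge_inv_ip (A : Matrix (Fin m) (Fin n) ℤ) (b : Fin m → ℤ)
    (hrank : A.rank = m) (c : Fin n → ℝ)
    (x₀ : Fin n → ℤ) (hx₀ : IPfeas A b x₀) :
    (⨅ β : {β : Fin m → Fin n // FeasBasis A b β}, invVal (IFR_G A b β.1 x₀) c) ≤
        invVal (IFR_LP A b x₀) c ∧
    invVal (IFR_IP A b x₀) c ≤
      ⨅ β : {β : Fin m → Fin n // FeasBasis A b β}, invVal (IFR_G A b β.1 x₀) c := by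
  refine ⟨?_, le_iInf fun β => invVal_anti (IFR_G_subset_IFR_IP A b β.1 x₀) c⟩
  rw [← invVal_iUnion]
  exact invVal_anti (IFR_LP_subset_iUnion_IFR_G A b hrank x₀ hx₀) c

end InverseGCR
end

section
/- (Value relation) val(G^B) = val(S^B) + c_Bᵀ A_B⁻¹ b, where S^B is the shortest 0-to-Sb path problem on the group graph with weights c̄_N. If additionally B is an optimal basis of the LP relaxation, then val(G^B) = val(S^B) + val(LP). -/
/-! For every integer `x` with `A x = b`, `cᵀ x = c_Bᵀ A_B⁻¹ b + c̄_Nᵀ x_N`, since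
`c̄ = c − c_Bᵀ A_B⁻¹ A` vanishes on `B`. Hence `val(G^B)` is this constant plus the infimum of
`c̄_Nᵀ x_N` over those `x_N ≥ 0` that extend to an integer solution of `A_B x_B + A_N x_N = b`.
By the Smith normal form `S A_B T = diag(w)` with `S`, `T` unimodular, such an extension exists
iff `w_i ∣ (S (b − A_N x_N))_i` for all `i`, i.e. iff `x_N` counts the arcs of a `0`-to-`Sb` path
in the group graph. If `B` is moreover dual feasible, every LP-feasible `x` has
`cᵀ x ≥ c_Bᵀ A_B⁻¹ b`, attained by the basic solution. -/

namespace InverseGCR16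

variable {m n q : ℕ}

def ABR (A : Matrix (Fin m) (Fin n) ℤ) (β : Fin m → Fin n) : Matrix (Fin m) (Fin m) ℝ :=
  (A.map (Int.cast : ℤ → ℝ)).submatrix id β

/-- Reduced cost `c̄_j = c_j − c_Bᵀ A_B⁻¹ A_j`. -/
noncomputable def redCost (A : Matrix (Fin m) (Fin n) ℤ) (c : Fin n → ℝ)
    (β : Fin m → Fin n) (j : Fin n) : ℝ :=
  c j - dotProduct (Matrix.vecMul (fun i => c (β i)) (ABR A β)⁻¹)
    (fun i => (A i j : ℝ))

/-- Optimal value (infimum in `EReal`) of the GCR `G^B`. -/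
noncomputable def valG (A : Matrix (Fin m) (Fin n) ℤ) (b : Fin m → ℤ) (c : Fin n → ℝ)
    (β : Fin m → Fin n) : EReal :=
  sInf {v : EReal | ∃ x : Fin n → ℤ,
    (A.mulVec x = b ∧ ∀ i ∉ Finset.image β Finset.univ, 0 ≤ x i) ∧
    v = ((∑ i, c i * (x i : ℝ) : ℝ) : EReal)}

/-- Optimal value (infimum in `EReal`) of the LP relaxation. -/
noncomputable def valLP (A : Matrix (Fin m) (Fin n) ℤ) (b : Fin m → ℤ)
    (c : Fin n → ℝ) : EReal :=
  sInf {v : EReal | ∃ x : Fin n → ℝ,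
    ((A.map (Int.cast : ℤ → ℝ)).mulVec x = (fun i => (b i : ℝ)) ∧ ∀ i, 0 ≤ x i) ∧
    v = ((∑ i, c i * x i : ℝ) : EReal)}

/-- Optimal value (infimum in `EReal`) of the shortest `0`-to-`Sb` path problem `S^B`
on the group graph, paths encoded by the number of arcs traversed from each class. -/
noncomputable def valS (A : Matrix (Fin m) (Fin n) ℤ) (c : Fin n → ℝ)
    (β : Fin m → Fin n) (η : Fin q → Fin n) (w : Fin m → ℕ)
    (g : Fin q → ∀ i, ZMod (w i)) (tgt : ∀ i, ZMod (w i)) : EReal :=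
  sInf {v : EReal | ∃ p : Fin q → ℕ, (∑ j, p j • g j) = tgt ∧
    v = ((∑ j, redCost A c β (η j) * (p j : ℝ) : ℝ) : EReal)}

end InverseGCR16

open Matrix

noncomputable def EReal.addCoeOrderIso (r : ℝ) : EReal ≃o EReal where
  toFun x := x + r
  invFun x := x - r
  left_inv _ := EReal.add_sub_cancel_right
  right_inv _ := EReal.sub_add_cancel
  map_rel_iff' := (EReal.addLECancellable_coe r).add_le_add_iff_right

theorem EReal.sInf_image_add_coe (s : Set EReal) (r : ℝ) :
    sInf ((· + (r : EReal)) '' s) = sInf s + r :=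
  sInf_image.trans ((addCoeOrderIso r).map_sInf s).symm

section RangeCompl

open Function Set

variable {ι κ ν : Type*} {β : ι → ν} {η : κ → ν}

noncomputable def Equiv.ofRangeCompl (hβ : Injective β) (hη : Injective η)
    (hcompl : range η = (range β)ᶜ) : ι ⊕ κ ≃ ν :=
  Equiv.ofBijective (Sum.elim β η)
    ⟨hβ.sumElim hη fun a b hab => (hcompl ▸ mem_range_self b : η b ∈ (range β)ᶜ) ⟨a, hab⟩,
      Set.range_eq_univ.1 (by rw [Set.Sum.elim_range, hcompl, union_compl_self])⟩

variable (hβ : Injective β) (hη : Injective η) (hcompl : range η = (range β)ᶜ)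
include hβ hη hcompl

theorem forall_iff_forall_comp_of_range_compl {p : ν → Prop} :
    (∀ i, p i) ↔ (∀ k, p (β k)) ∧ ∀ j, p (η j) := by
  rw [(Equiv.ofRangeCompl hβ hη hcompl).symm.forall_congr_left, Sum.forall]
  rfl

theorem exists_iff_exists_comp_of_range_compl {α : Type*} {P : (ι → α) → (κ → α) → Prop} :
    (∃ x : ν → α, P (x ∘ β) (x ∘ η)) ↔ ∃ u v, P u v := by
  refine ⟨fun ⟨x, hx⟩ => ⟨_, _, hx⟩, fun ⟨u, v, huv⟩ => ?_⟩
  set e := Equiv.ofRangeCompl hβ hη hcompl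
  have hinl (k : ι) : e.symm (β k) = .inl k := e.symm_apply_eq.2 rfl
  have hinr (j : κ) : e.symm (η j) = .inr j := e.symm_apply_eq.2 rfl
  refine ⟨Sum.elim u v ∘ e.symm, ?_⟩
  convert huv using 1 <;> ext <;> simp [hinl, hinr]

theorem Fintype.sum_eq_sum_comp_add_sum_comp_of_range_compl [Fintype ι] [Fintype κ] [Fintype ν]
    {M : Type*} [AddCommMonoid M] (f : ν → M) :
    ∑ i, f i = ∑ k, f (β k) + ∑ j, f (η j) := by
  rw [← (Equiv.ofRangeCompl hβ hη hcompl).sum_comp, Fintype.sum_sum_type]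
  rfl

theorem Matrix.mulVec_eq_add_of_range_compl [Fintype ι] [Fintype κ] [Fintype ν] {ρ R : Type*}
    [NonUnitalNonAssocSemiring R] (A : Matrix ρ ν R) (x : ν → R) :
    A *ᵥ x = A.submatrix id β *ᵥ (x ∘ β) + A.submatrix id η *ᵥ (x ∘ η) :=
  funext fun _ => Fintype.sum_eq_sum_comp_add_sum_comp_of_range_compl hβ hη hcompl _

end RangeCompl

namespace Matrix

variable {ι κ R : Type*} [Fintype ι] [DecidableEq ι] [CommRing R]

theorem exists_diagonal_mulVec_eq_iff (d v : ι → R) :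
    (∃ u, diagonal d *ᵥ u = v) ↔ ∀ i, d i ∣ v i := by
  simp only [funext_iff, mulVec_diagonal, Dvd.dvd, eq_comm (b := v _)]
  exact (Classical.skolem (p := fun i c => v i = d i * c)).symm

theorem exists_mulVec_eq_iff_dvd {M S T : Matrix ι ι R} {d : ι → R} (hS : IsUnit S.det)
    (hT : IsUnit T.det) (hSMT : S * M * T = diagonal d) (r : ι → R) :
    (∃ y, M *ᵥ y = r) ↔ ∀ i, d i ∣ (S *ᵥ r) i := by
  have hT_surj : Function.Surjective (T *ᵥ ·) :=
    mulVec_surjective_iff_isUnit.2 ((isUnit_iff_isUnit_det T).2 hT)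
  have hS_inj : Function.Injective (S *ᵥ ·) :=
    mulVec_injective_of_det_mem_nonZeroDivisors hS.mem_nonZeroDivisors
  rw [← exists_diagonal_mulVec_eq_iff, hT_surj.exists]
  refine exists_congr fun u => ?_
  rw [← hSMT, ← mulVec_mulVec, ← mulVec_mulVec, hS_inj.eq_iff]

end Matrix

theorem sum_nsmul_intCast_col_eq_mulVec {ι κ : Type*} [Fintype κ] (C : Matrix ι κ ℤ) (w : ι → ℕ)
    (p : κ → ℕ) :
    ∑ j, p j • (fun i => (C i j : ZMod (w i))) =
      fun i => ((C *ᵥ fun j => (p j : ℤ)) i : ZMod (w i)) := by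
  ext i
  simp [Matrix.mulVec, dotProduct, mul_comm]

namespace InverseGCR16

variable {m n q : ℕ}

noncomputable def simplexMultipliers (A : Matrix (Fin m) (Fin n) ℤ) (c : Fin n → ℝ)
    (β : Fin m → Fin n) : Fin m → ℝ :=
  (fun i => c (β i)) ᵥ* (ABR A β)⁻¹

section Basis

variable (A : Matrix (Fin m) (Fin n) ℤ) (b : Fin m → ℤ) (c : Fin n → ℝ) {β : Fin m → Fin n}
  {η : Fin q → Fin n}

theorem redCost_basis (hAB : IsUnit (ABR A β).det) (k : Fin m) : redCost A c β (β k) = 0 := by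
  have h : simplexMultipliers A c β ᵥ* ABR A β = fun i => c (β i) := by
    rw [simplexMultipliers, vecMul_vecMul, nonsing_inv_mul _ hAB, vecMul_one]
  exact sub_eq_zero.2 (congrFun h k).symm

theorem dotProduct_eq_simplexMultipliers_add_redCost (hβ : Function.Injective β)
    (hη : Function.Injective η) (hcompl : Set.range η = (Set.range β)ᶜ)
    (hAB : IsUnit (ABR A β).det) {x : Fin n → ℝ}
    (hx : A.map (Int.cast : ℤ → ℝ) *ᵥ x = fun i => (b i : ℝ)) :
    c ⬝ᵥ x = simplexMultipliers A c β ⬝ᵥ (fun i => (b i : ℝ)) +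
      ∑ j, redCost A c β (η j) * x (η j) := by
  set y := simplexMultipliers A c β
  have hred : (fun j => redCost A c β j) = c - y ᵥ* A.map Int.cast := rfl
  calc c ⬝ᵥ x = (c - y ᵥ* A.map Int.cast) ⬝ᵥ x + y ⬝ᵥ (A.map Int.cast *ᵥ x) := by
        rw [dotProduct_mulVec, sub_dotProduct, sub_add_cancel]
    _ = _ := by
      rw [hx, ← hred, dotProduct, Fintype.sum_eq_sum_comp_add_sum_comp_of_range_compl hβ hη hcompl]
      simp [redCost_basis A c hAB, add_comm]

theorem valG_eq_sInf_image_add (hβ : Function.Injective β) (hη : Function.Injective η)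
    (hcompl : Set.range η = (Set.range β)ᶜ) (hAB : IsUnit (ABR A β).det) :
    valG A b c β = sInf ((· + ((simplexMultipliers A c β ⬝ᵥ fun i => (b i : ℝ) : ℝ) : EReal)) ''
      {v | ∃ p : Fin q → ℕ, (∃ xB, A.submatrix id β *ᵥ xB +
          A.submatrix id η *ᵥ (fun j => (p j : ℤ)) = b) ∧
        v = ((∑ j, redCost A c β (η j) * (p j : ℝ) : ℝ) : EReal)}) := by
  have hobj {x : Fin n → ℤ} (hx : A *ᵥ x = b) :
      ((∑ i, c i * (x i : ℝ) : ℝ) : EReal) =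
        ((∑ j, redCost A c β (η j) * (x (η j) : ℝ) : ℝ) : EReal) +
          ((simplexMultipliers A c β ⬝ᵥ fun i => (b i : ℝ) : ℝ) : EReal) := by
    have hxℝ : A.map (Int.cast : ℤ → ℝ) *ᵥ (fun i => (x i : ℝ)) = fun i => (b i : ℝ) :=
      funext fun i => by rw [← hx]; exact ((Int.castRingHom ℝ).map_mulVec A x i).symm
    rw [← EReal.coe_add, add_comm]
    exact congrArg _ (dotProduct_eq_simplexMultipliers_add_redCost A b c hβ hη hcompl hAB hxℝ)
  have hnonbasic {x : Fin n → ℤ} :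
      (∀ i ∉ Finset.image β Finset.univ, 0 ≤ x i) ↔ ∀ j, 0 ≤ x (η j) := by
    simp [← Set.mem_range, ← Set.mem_compl_iff, ← hcompl, Set.forall_mem_range]
  rw [valG]
  congr 1
  ext v
  simp only [Set.mem_ofPred_eq, Set.mem_image, hnonbasic]
  constructor
  · rintro ⟨x, ⟨hAx, hx0⟩, rfl⟩
    obtain ⟨p, hp⟩ : ∃ p : Fin q → ℕ, (fun j => (p j : ℤ)) = x ∘ η := CanLift.prf _ hx0
    refine ⟨_, ⟨p, ⟨x ∘ β, ?_⟩, rfl⟩, ?_⟩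
    · rw [hp, ← mulVec_eq_add_of_range_compl hβ hη hcompl, hAx]
    · have hp' (j : Fin q) : x (η j) = p j := (congrFun hp j).symm
      simp only [hobj hAx, hp', Int.cast_natCast]
  · rintro ⟨_, ⟨p, ⟨xB, hxB⟩, rfl⟩, rfl⟩
    obtain ⟨x, rfl, hxη⟩ := (exists_iff_exists_comp_of_range_compl hβ hη hcompl
      (P := fun u v => u = xB ∧ v = fun j => (p j : ℤ))).2 ⟨_, _, rfl, rfl⟩
    have hAx : A *ᵥ x = b := by rw [mulVec_eq_add_of_range_compl hβ hη hcompl, hxη, hxB]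
    have hxη' (j : Fin q) : x (η j) = p j := congrFun hxη j
    refine ⟨x, ⟨hAx, fun j => hxη' j ▸ Int.natCast_nonneg _⟩, ?_⟩
    simp only [hobj hAx, hxη', Int.cast_natCast]

theorem valLP_eq_simplexMultipliers_dotProduct (hβ : Function.Injective β)
    (hη : Function.Injective η) (hcompl : Set.range η = (Set.range β)ᶜ) (hAB : IsUnit (ABR A β).det)
    (hfeas : ∀ i, 0 ≤ ((ABR A β)⁻¹ *ᵥ fun i => (b i : ℝ)) i)
    (hred : ∀ j, 0 ≤ redCost A c β j) :
    valLP A b c = ((simplexMultipliers A c β ⬝ᵥ fun i => (b i : ℝ) : ℝ) : EReal) := by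
  refine le_antisymm (sInf_le ?_) (le_sInf ?_)
  · obtain ⟨x, hxβ, hxη⟩ := (exists_iff_exists_comp_of_range_compl hβ hη hcompl
      (P := fun u v => u = (ABR A β)⁻¹ *ᵥ (fun i => (b i : ℝ)) ∧ v = 0)).2 ⟨_, _, rfl, rfl⟩
    have hAx : A.map Int.cast *ᵥ x = fun i => (b i : ℝ) := by
      rw [mulVec_eq_add_of_range_compl hβ hη hcompl, hxβ, hxη, mulVec_zero, add_zero]
      change ABR A β *ᵥ ((ABR A β)⁻¹ *ᵥ _) = _
      rw [mulVec_mulVec, mul_nonsing_inv _ hAB, one_mulVec]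
    refine ⟨x, ⟨hAx, (forall_iff_forall_comp_of_range_compl hβ hη hcompl).2
      ⟨fun k => ?_, fun j => (congrFun hxη j).ge⟩⟩, ?_⟩
    · change 0 ≤ (x ∘ β) k
      exact hxβ ▸ hfeas k
    · have hxη' (j : Fin q) : x (η j) = 0 := congrFun hxη j
      rw [← dotProduct.eq_def,
        dotProduct_eq_simplexMultipliers_add_redCost A b c hβ hη hcompl hAB hAx]
      simp [hxη']
  · rintro _ ⟨x, ⟨hAx, hx0⟩, rfl⟩
    rw [EReal.coe_le_coe_iff, ← dotProduct.eq_def,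
      dotProduct_eq_simplexMultipliers_add_redCost A b c hβ hη hcompl hAB hAx]
    exact le_add_of_nonneg_right (Finset.sum_nonneg fun j _ => mul_nonneg (hred _) (hx0 _))

theorem sum_nsmul_eq_iff_exists_completion {S T : Matrix (Fin m) (Fin m) ℤ} {w : Fin m → ℕ}
    (hS : IsUnit S.det) (hT : IsUnit T.det)
    (hSNF : S * A.submatrix id β * T = diagonal fun i => (w i : ℤ)) (p : Fin q → ℕ) :
    (∑ j, p j • fun i => (((S * A.submatrix id η) i j : ℤ) : ZMod (w i))) =
        (fun i => ((S *ᵥ b) i : ZMod (w i))) ↔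
      ∃ xB, A.submatrix id β *ᵥ xB + A.submatrix id η *ᵥ (fun j => (p j : ℤ)) = b := by
  calc _ ↔ ∀ i, (w i : ℤ) ∣ (S *ᵥ (b - A.submatrix id η *ᵥ fun j => (p j : ℤ))) i := by
        rw [sum_nsmul_intCast_col_eq_mulVec, funext_iff]
        simp only [ZMod.intCast_eq_intCast_iff_dvd_sub, mulVec_sub, mulVec_mulVec, Pi.sub_apply]
    _ ↔ _ := by
      simp_rw [← exists_mulVec_eq_iff_dvd hS hT hSNF, eq_sub_iff_add_eq]

end Basis

theorem valG_eq_valS_add_const_general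
    (A : Matrix (Fin m) (Fin n) ℤ) (b : Fin m → ℤ) (c : Fin n → ℝ)
    (β : Fin m → Fin n) (η : Fin q → Fin n)
    (hβ : Function.Injective β) (hη : Function.Injective η)
    (hcompl : Set.range η = (Set.range β)ᶜ)
    (S T : Matrix (Fin m) (Fin m) ℤ)
    (hS : S.det = 1 ∨ S.det = -1) (hT : T.det = 1 ∨ T.det = -1)
    (w : Fin m → ℕ)
    (hSNF : S * A.submatrix id β * T = Matrix.diagonal (fun i => (w i : ℤ)))
    (hAB : IsUnit (ABR A β).det)
    (hfeasbasis : ∀ i, 0 ≤ ((ABR A β)⁻¹.mulVec (fun i => (b i : ℝ))) i)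
    (g : Fin q → ∀ i, ZMod (w i))
    (hg : g = fun j i => (((S * A.submatrix id η) i j : ℤ) : ZMod (w i)))
    (tgt : ∀ i, ZMod (w i)) (htgt : tgt = fun i => ((S.mulVec b i : ℤ) : ZMod (w i))) :
    valG A b c β = valS A c β η w g tgt +
      ((dotProduct (Matrix.vecMul (fun i => c (β i)) (ABR A β)⁻¹)
        (fun i => (b i : ℝ)) : ℝ) : EReal) ∧
    ((∀ j, 0 ≤ redCost A c β j) →
      valG A b c β = valS A c β η w g tgt + valLP A b c) := by
  have hG : valG A b c β = valS A c β η w g tgt +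
      ((simplexMultipliers A c β ⬝ᵥ fun i => (b i : ℝ) : ℝ) : EReal) := by
    rw [valG_eq_sInf_image_add A b c hβ hη hcompl hAB, valS, EReal.sInf_image_add_coe, hg, htgt]
    simp_rw [sum_nsmul_eq_iff_exists_completion A b (Int.isUnit_iff.2 hS) (Int.isUnit_iff.2 hT)
      hSNF]
  refine ⟨hG, fun hred => ?_⟩
  rw [hG, valLP_eq_simplexMultipliers_dotProduct A b c hβ hη hcompl hAB hfeasbasis hred]

/-- `val(G^B) = val(S^B) + c_Bᵀ A_B⁻¹ b`; and if moreover `B` is an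
optimal basis of the LP relaxation (nonnegative reduced costs, so that
`val(LP) = c_Bᵀ A_B⁻¹ b`), then `val(G^B) = val(S^B) + val(LP)`. -/
theorem valG_eq_valS_add_const
    (A : Matrix (Fin m) (Fin n) ℤ) (b : Fin m → ℤ) (c : Fin n → ℝ)
    (β : Fin m → Fin n) (η : Fin q → Fin n)
    (hβ : Function.Injective β) (hη : Function.Injective η)
    (hcompl : Set.range η = (Set.range β)ᶜ)
    (S T : Matrix (Fin m) (Fin m) ℤ)
    (hS : S.det = 1 ∨ S.det = -1) (hT : T.det = 1 ∨ T.det = -1)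
    (w : Fin m → ℕ) (hw : ∀ i, 0 < w i)
    (hSNF : S * A.submatrix id β * T = Matrix.diagonal (fun i => (w i : ℤ)))
    (hAB : IsUnit (ABR A β).det)
    (hfeasbasis : ∀ i, 0 ≤ ((ABR A β)⁻¹.mulVec (fun i => (b i : ℝ))) i)
    (g : Fin q → ∀ i, ZMod (w i))
    (hg : g = fun j i => (((S * A.submatrix id η) i j : ℤ) : ZMod (w i)))
    (tgt : ∀ i, ZMod (w i)) (htgt : tgt = fun i => ((S.mulVec b i : ℤ) : ZMod (w i))) :
    valG A b c β = valS A c β η w g tgt +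
      ((dotProduct (Matrix.vecMul (fun i => c (β i)) (ABR A β)⁻¹)
        (fun i => (b i : ℝ)) : ℝ) : EReal) ∧
    ((∀ j, 0 ≤ redCost A c β j) →
      valG A b c β = valS A c β η w g tgt + valLP A b c) :=
  valG_eq_valS_add_const_general A b c β η hβ hη hcompl S T hS hT w hSNF hAB hfeasbasis g hg tgt
    htgt

end InverseGCR16
end

section
/- (Exactness of inverse GCR under Gomory's asymptotic condition) Suppose x° is feasible for the IP and the IP satisfies the condition that for every objective d for which the IP has an optimal solution, any optimal basis B̂ of LP^d satisfies val(IP^d) = val(G^{B̂,d}). Then ⋃_{B∈ℬ} IFR(G^B, x°) = IFR(IP, x°), where ℬ is the set of feasible LP bases; consequently min_{B∈ℬ} val(INV(G^B, x°)) = val(INV(IP, x°)). -/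
namespace InverseGCR17

variable {m n : ℕ}

/-- Feasibility for the IP `min{dᵀx : Ax = b, x ≥ 0, x ∈ ℤⁿ}`. -/
def IPfeas (A : Matrix (Fin m) (Fin n) ℤ) (b : Fin m → ℤ) (x : Fin n → ℤ) : Prop :=
  A.mulVec x = b ∧ ∀ i, 0 ≤ x i

/-- Feasibility for the Gomory corner relaxation at basis `β` (nonnegativity dropped
on basic variables). -/
def Gfeas (A : Matrix (Fin m) (Fin n) ℤ) (b : Fin m → ℤ) (β : Fin m → Fin n)
    (x : Fin n → ℤ) : Prop :=
  A.mulVec x = b ∧ ∀ i ∉ Finset.image β Finset.univ, 0 ≤ x i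

/-- Feasibility for the LP relaxation. -/
def LPfeas (A : Matrix (Fin m) (Fin n) ℤ) (b : Fin m → ℤ) (x : Fin n → ℝ) : Prop :=
  (A.map (Int.cast : ℤ → ℝ)).mulVec x = (fun i => (b i : ℝ)) ∧ ∀ i, 0 ≤ x i

def obj (d : Fin n → ℝ) (x : Fin n → ℝ) : ℝ := ∑ i, d i * x i

def objZ (d : Fin n → ℝ) (x : Fin n → ℤ) : ℝ := ∑ i, d i * (x i : ℝ)

/-- The real basis matrix `A_B`. -/
def ABR (A : Matrix (Fin m) (Fin n) ℤ) (β : Fin m → Fin n) : Matrix (Fin m) (Fin m) ℝ :=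
  (A.map (Int.cast : ℤ → ℝ)).submatrix id β

/-- `β` is a feasible basis of the LP relaxation: injective, nonsingular `A_B`,
and `A_B⁻¹ b ≥ 0`. -/
def FeasBasis (A : Matrix (Fin m) (Fin n) ℤ) (b : Fin m → ℤ) (β : Fin m → Fin n) : Prop :=
  Function.Injective β ∧ IsUnit (ABR A β).det ∧
    ∀ i, 0 ≤ ((ABR A β)⁻¹.mulVec (fun i => (b i : ℝ))) i

/-- The reduced cost `d̄_j = d_j − d_Bᵀ A_B⁻¹ A_j` at basis `β` under objective `d`. -/
noncomputable def redCost (A : Matrix (Fin m) (Fin n) ℤ) (d : Fin n → ℝ) (β : Fin m → Fin n)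
    (j : Fin n) : ℝ :=
  d j - dotProduct (Matrix.vecMul (fun i => d (β i)) (ABR A β)⁻¹)
    (fun i => (A i j : ℝ))

/-- Inverse-feasible region of the LP relaxation w.r.t. `x₀`. -/
def IFR_LP (A : Matrix (Fin m) (Fin n) ℤ) (b : Fin m → ℤ) (x₀ : Fin n → ℤ) :
    Set (Fin n → ℝ) :=
  {d | ∀ x : Fin n → ℝ, LPfeas A b x → objZ d x₀ ≤ obj d x}

/-- Inverse-feasible region of the GCR at basis `β` w.r.t. `x₀`. -/
def IFR_G (A : Matrix (Fin m) (Fin n) ℤ) (b : Fin m → ℤ) (β : Fin m → Fin n)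
    (x₀ : Fin n → ℤ) : Set (Fin n → ℝ) :=
  {d | ∀ x : Fin n → ℤ, Gfeas A b β x → objZ d x₀ ≤ objZ d x}

/-- Inverse-feasible region of the IP w.r.t. `x₀`. -/
def IFR_IP (A : Matrix (Fin m) (Fin n) ℤ) (b : Fin m → ℤ) (x₀ : Fin n → ℤ) :
    Set (Fin n → ℝ) :=
  {d | ∀ x : Fin n → ℤ, IPfeas A b x → objZ d x₀ ≤ objZ d x}


/-- Optimal value (infimum in `EReal`) of `IP^d`. -/
noncomputable def valIP (A : Matrix (Fin m) (Fin n) ℤ) (b : Fin m → ℤ)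
    (d : Fin n → ℝ) : EReal :=
  sInf {v : EReal | ∃ x : Fin n → ℤ, IPfeas A b x ∧ v = ((objZ d x : ℝ) : EReal)}

/-- Optimal value (infimum in `EReal`) of `G^{B,d}`. -/
noncomputable def valG (A : Matrix (Fin m) (Fin n) ℤ) (b : Fin m → ℤ)
    (d : Fin n → ℝ) (β : Fin m → Fin n) : EReal :=
  sInf {v : EReal | ∃ x : Fin n → ℤ, Gfeas A b β x ∧ v = ((objZ d x : ℝ) : EReal)}

/-- `β` is an optimal basis of `LP^d`: a feasible basis with nonnegative reduced
costs. -/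
noncomputable def OptBasis (A : Matrix (Fin m) (Fin n) ℤ) (b : Fin m → ℤ)
    (d : Fin n → ℝ) (β : Fin m → Fin n) : Prop :=
  FeasBasis A b β ∧ ∀ j, 0 ≤ redCost A d β j

/-- Value of the inverse problem `min{‖d − c‖ : d ∈ S}` (infimum in `EReal`). -/
noncomputable def invVal (S : Set (Fin n → ℝ)) (c : Fin n → ℝ) : EReal :=
  sInf ((fun d => ((‖d - c‖ : ℝ) : EReal)) '' S)

/-!
For `d ∈ IFR(IP, x°)` the point `x°` is optimal for `IP^d`, so it suffices to find an optimal
basis `B` of `LP^d`: Gomory's condition then gives `val(G^{B,d}) = val(IP^d) = dᵀx°`, that is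
`d ∈ IFR(G^B, x°)`, while the reverse inclusion holds because every `G^B` relaxes the IP. The
identity of inverse values follows by taking infima over the union.

The optimal basis comes from a finite simplex argument. Replacing `b` by
`b + A_{B₀}(ε, ε², …, εᵐ)` for a feasible basis `B₀` and a small `ε > 0` makes every basic
solution nondegenerate (each coordinate is a nonzero polynomial in `ε`, as `A_B⁻¹ A_{B₀}` is
invertible) while every basis feasible for the perturbed right-hand side stays feasible for `b`.
Among the finitely many perturbed-feasible bases take one of least cost. A negative reduced cost
there would either allow a strictly improving pivot or exhibit an edge direction `w ≥ 0` with
`dᵀw < 0`; but `w` is rational, so a positive multiple of it is an integral ray along which the IP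
improves on `x°`.
-/

open Matrix Function Filter Topology

section BasicSolutions

variable {M : Matrix (Fin m) (Fin n) ℝ} {β : Fin m → Fin n}

def IsColBasis (M : Matrix (Fin m) (Fin n) ℝ) (β : Fin m → Fin n) : Prop :=
  Injective β ∧ IsUnit (M.submatrix id β).det

noncomputable def basicSol (M : Matrix (Fin m) (Fin n) ℝ) (β : Fin m → Fin n)
    (r : Fin m → ℝ) : Fin n → ℝ :=
  extend β ((M.submatrix id β)⁻¹ *ᵥ r) 0

noncomputable def edgeDir (M : Matrix (Fin m) (Fin n) ℝ) (β : Fin m → Fin n) (j : Fin n) :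
    Fin n → ℝ :=
  Pi.single j 1 - basicSol M β (M.col j)

lemma basicSol_apply_basic (hβ : Injective β) (r : Fin m → ℝ) (k : Fin m) :
    basicSol M β r (β k) = ((M.submatrix id β)⁻¹ *ᵥ r) k :=
  hβ.extend_apply _ _ _

lemma basicSol_apply_of_notMem_range (r : Fin m → ℝ) {i : Fin n} (hi : i ∉ Set.range β) :
    basicSol M β r i = 0 :=
  extend_apply' _ _ _ hi

lemma dotProduct_extend (hβ : Injective β) (d : Fin n → ℝ) (y : Fin m → ℝ) :
    d ⬝ᵥ extend β y 0 = (d ∘ β) ⬝ᵥ y := by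
  simp only [dotProduct]
  rw [← Finset.sum_subset (Finset.subset_univ (Finset.univ.image β)) fun j _ hj => by
    rw [extend_apply' _ _ _ (by simpa using hj), Pi.zero_apply, mul_zero]]
  rw [Finset.sum_image fun _ _ _ _ h => hβ h]
  simp [hβ.extend_apply]

lemma mulVec_extend (hβ : Injective β) (y : Fin m → ℝ) :
    M *ᵥ extend β y 0 = M.submatrix id β *ᵥ y :=
  funext fun i => dotProduct_extend hβ (M i) y

lemma eq_extend_of_forall_notMem_range {x : Fin n → ℝ} (hx : ∀ i ∉ Set.range β, x i = 0)
    (hβ : Injective β) : x = extend β (x ∘ β) 0 := by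
  ext i
  by_cases hi : i ∈ Set.range β
  · obtain ⟨k, rfl⟩ := hi
    exact (hβ.extend_apply (x ∘ β) 0 k).symm
  · rw [extend_apply' _ _ _ hi, hx i hi, Pi.zero_apply]

lemma mulVec_basicSol (hβ : IsColBasis M β) (r : Fin m → ℝ) : M *ᵥ basicSol M β r = r := by
  rw [basicSol, mulVec_extend hβ.1, mulVec_mulVec, mul_nonsing_inv _ hβ.2, one_mulVec]

lemma basicSol_nonneg {r : Fin m → ℝ} (hr : 0 ≤ (M.submatrix id β)⁻¹ *ᵥ r) :
    0 ≤ basicSol M β r := by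
  intro i
  rw [basicSol, extend_def]
  split_ifs
  exacts [hr _, le_rfl]

lemma basicSol_eq (hβ : IsColBasis M β) {x : Fin n → ℝ} {r : Fin m → ℝ} (hMx : M *ᵥ x = r)
    (hx : ∀ i ∉ Set.range β, x i = 0) : basicSol M β r = x := by
  rw [eq_extend_of_forall_notMem_range hx hβ.1, mulVec_extend hβ.1] at hMx
  rw [basicSol, ← hMx, mulVec_mulVec, nonsing_inv_mul _ hβ.2, one_mulVec,
    ← eq_extend_of_forall_notMem_range hx hβ.1]

lemma edgeDir_basic (hβ : IsColBasis M β) (k : Fin m) : edgeDir M β (β k) = 0 := by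
  rw [edgeDir, sub_eq_zero, eq_comm]
  refine basicSol_eq hβ (mulVec_single_one _ _) fun i hi => ?_
  exact Pi.single_eq_of_ne (fun h => hi ⟨k, h.symm⟩) _

lemma mulVec_edgeDir (hβ : IsColBasis M β) (j : Fin n) : M *ᵥ edgeDir M β j = 0 := by
  rw [edgeDir, mulVec_sub, mulVec_single_one, mulVec_basicSol hβ, sub_self]

end BasicSolutions

lemma exists_ratio_test {ι : Type*} [Fintype ι] {x w : ι → ℝ} (hx : 0 ≤ x)
    (hw : ∃ i, w i < 0) :
    ∃ k, w k < 0 ∧ 0 ≤ x + (x k / -w k) • w ∧ (x + (x k / -w k) • w) k = 0 := by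
  obtain ⟨k, hk, hmin⟩ := Finset.exists_min_image {i | w i < 0} (fun i => x i / -w i)
    (by simpa [Finset.Nonempty] using hw)
  simp only [Finset.mem_filter, Finset.mem_univ, true_and] at hk hmin
  refine ⟨k, hk, fun i => ?_, ?_⟩
  · have hθ : 0 ≤ x k / -w k := div_nonneg (hx k) (by linarith)
    simp only [Pi.add_apply, Pi.smul_apply, smul_eq_mul, Pi.zero_apply]
    rcases le_or_gt 0 (w i) with hwi | hwi
    · exact add_nonneg (hx i) (mul_nonneg hθ hwi)
    · linarith [(le_div_iff₀ (neg_pos.2 hwi)).1 (hmin i hwi)]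
  · simp only [Pi.add_apply, Pi.smul_apply, smul_eq_mul]
    field_simp [hk.ne]
    ring

section FeasibleBasis

variable {M : Matrix (Fin m) (Fin n) ℝ}

lemma exists_colBasis_superset (hM : Submodule.span ℝ (Set.range M.col) = ⊤)
    {s : Set (Fin n)} (hs : LinearIndepOn ℝ M.col s) :
    ∃ β, IsColBasis M β ∧ s ⊆ Set.range β := by
  classical
  obtain ⟨t, -, hst, hspan, ht⟩ := exists_linearIndepOn_extension hs (Set.subset_univ s)
  have htop : ⊤ ≤ Submodule.span ℝ (Set.range fun i : t => M.col i) := by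
    rw [← hM, ← Set.image_univ, ← Set.image_eq_range]
    exact Submodule.span_le.2 hspan
  have hcard : Fintype.card t = m := by
    simpa using (Module.finrank_eq_card_basis (Module.Basis.mk ht htop)).symm
  let e : Fin m ≃ t := (Fintype.equivFinOfCardEq hcard).symm
  refine ⟨fun k => e k, ⟨Subtype.val_injective.comp e.injective, ?_⟩, fun i hi => ?_⟩
  · exact (isUnit_iff_isUnit_det _).1
      (linearIndependent_cols_iff_isUnit.1 (ht.comp e e.injective))
  · exact ⟨e.symm ⟨i, hst hi⟩, by simp⟩

lemma exists_nonneg_solution_linearIndepOn {x : Fin n → ℝ} (hx : 0 ≤ x) :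
    ∃ y, 0 ≤ y ∧ M *ᵥ y = M *ᵥ x ∧
      LinearIndepOn ℝ M.col (({i | y i ≠ 0} : Finset (Fin n)) : Set (Fin n)) := by
  induction hk : ({i | x i ≠ 0} : Finset (Fin n)).card using Nat.strong_induction_on
    generalizing x with
  | _ k ih =>
  by_cases hind : LinearIndepOn ℝ M.col (({i | x i ≠ 0} : Finset (Fin n)) : Set (Fin n))
  · exact ⟨x, hx, rfl, hind⟩
  obtain ⟨f, hf, i₀, hi₀, hfi₀⟩ := not_linearIndepOn_finset_iff.1 hind
  let z : Fin n → ℝ := fun i => if x i ≠ 0 then f i else 0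
  have hMz : M *ᵥ z = 0 := by
    rw [← hf]
    ext a
    simp [z, mulVec, dotProduct, Finset.sum_apply, Finset.sum_filter, mul_comm]
  have hzx : ∀ i, x i = 0 → z i = 0 := fun i hi => if_neg (not_not.2 hi)
  obtain ⟨w, hMw, hwx, hw⟩ : ∃ w, M *ᵥ w = 0 ∧ (∀ i, x i = 0 → w i = 0) ∧ ∃ i, w i < 0 := by
    have hzi₀ : z i₀ ≠ 0 := by simpa [z, (Finset.mem_filter.1 hi₀).2] using hfi₀
    rcases hzi₀.lt_or_gt with h | h
    · exact ⟨z, hMz, hzx, i₀, h⟩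
    · exact ⟨-z, by rw [mulVec_neg, hMz, neg_zero], fun i hi => by simp [hzx i hi], i₀,
        by simpa using h⟩
  obtain ⟨j, hwj, hy, hyj⟩ := exists_ratio_test hx hw
  set y := x + (x j / -w j) • w
  have hsub : ({i | y i ≠ 0} : Finset (Fin n)) ⊂ ({i | x i ≠ 0} : Finset (Fin n)) := by
    refine Finset.ssubset_iff_of_subset (fun i => ?_) |>.2 ⟨j, ?_, ?_⟩
    · simp only [Finset.mem_filter, Finset.mem_univ, true_and]
      intro hyi hxi
      exact hyi (by simp [y, hxi, hwx i hxi])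
    · simpa using fun hxj => hwj.ne (hwx j hxj)
    · simpa using hyj
  obtain ⟨y', hy', hMy', hind'⟩ := ih _ (hk ▸ Finset.card_lt_card hsub) hy rfl
  refine ⟨y', hy', ?_, hind'⟩
  rw [hMy', mulVec_add, mulVec_smul, hMw, smul_zero, add_zero]

theorem exists_feasible_colBasis (hM : Submodule.span ℝ (Set.range M.col) = ⊤)
    {x : Fin n → ℝ} {r : Fin m → ℝ} (hx : 0 ≤ x) (hMx : M *ᵥ x = r) :
    ∃ β, IsColBasis M β ∧ 0 ≤ (M.submatrix id β)⁻¹ *ᵥ r := by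
  obtain ⟨y, hy, hMy, hind⟩ := exists_nonneg_solution_linearIndepOn (M := M) hx
  obtain ⟨β, hβ, hyβ⟩ := exists_colBasis_superset hM hind
  refine ⟨β, hβ, fun k => ?_⟩
  rw [← basicSol_apply_basic hβ.1, basicSol_eq hβ (hMy.trans hMx) fun i hi => ?_]
  · exact hy _
  · by_contra h
    exact hi (hyβ (by simpa using h))

end FeasibleBasis

section Pivot

variable {M : Matrix (Fin m) (Fin n) ℝ} {β : Fin m → Fin n}

lemma edgeDir_apply_of_notMem_range {i : Fin n} (hi : i ∉ Set.range β) (j : Fin n) :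
    edgeDir M β j i = (Pi.single j 1 : Fin n → ℝ) i := by
  rw [edgeDir, Pi.sub_apply, basicSol_apply_of_notMem_range _ hi, sub_zero]

lemma injective_update_of_notMem_range (hβ : Injective β) {j : Fin n} (hj : j ∉ Set.range β)
    (r : Fin m) : Injective (update β r j) := by
  intro a b hab
  by_cases ha : a = r <;> by_cases hb : b = r
  · exact ha.trans hb.symm
  · subst ha
    rw [update_self, update_of_ne hb] at hab
    exact absurd ⟨b, hab.symm⟩ hj
  · subst hb
    rw [update_self, update_of_ne ha] at hab
    exact absurd ⟨a, hab⟩ hj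
  · rw [update_of_ne ha, update_of_ne hb] at hab
    exact hβ hab

lemma det_submatrix_update (hβ : IsColBasis M β) (r : Fin m) (j : Fin n) :
    (M.submatrix id (update β r j)).det =
      ((M.submatrix id β)⁻¹ *ᵥ M.col j) r * (M.submatrix id β).det := by
  set B := M.submatrix id β
  set u := B⁻¹ *ᵥ M.col j
  have hupd : M.submatrix id (update β r j) = B.updateCol r (M.col j) := by
    ext a k
    rcases eq_or_ne k r with rfl | hk <;> simp [B, *]
  have hcol : M.col j = fun a => ∑ k, u k • B a k := by
    have hBu : B *ᵥ u = M.col j := by rw [mulVec_mulVec, mul_nonsing_inv _ hβ.2, one_mulVec]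
    rw [← hBu]
    ext a
    simp [mulVec, dotProduct, mul_comm]
  rw [hupd, hcol, det_updateCol_sum, smul_eq_mul]

lemma isColBasis_update (hβ : IsColBasis M β) {j : Fin n} (hj : j ∉ Set.range β) {r : Fin m}
    (hr : edgeDir M β j (β r) ≠ 0) : IsColBasis M (update β r j) := by
  refine ⟨injective_update_of_notMem_range hβ.1 hj r, ?_⟩
  have hu : ((M.submatrix id β)⁻¹ *ᵥ M.col j) r = -edgeDir M β j (β r) := by
    rw [edgeDir, Pi.sub_apply, basicSol_apply_basic hβ.1, Pi.single_eq_of_ne fun h => hj ⟨r, h⟩]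
    ring
  rw [det_submatrix_update hβ, hu]
  exact (isUnit_iff_ne_zero.2 (neg_ne_zero.2 hr)).mul hβ.2

lemma exists_pivot (hβ : IsColBasis M β) {r : Fin m → ℝ} (hr : 0 ≤ (M.submatrix id β)⁻¹ *ᵥ r)
    (hnd : ∀ k, ((M.submatrix id β)⁻¹ *ᵥ r) k ≠ 0) {d : Fin n → ℝ} {j : Fin n}
    (hj : d ⬝ᵥ edgeDir M β j < 0) (hw : ¬ 0 ≤ edgeDir M β j) :
    ∃ β', IsColBasis M β' ∧ 0 ≤ (M.submatrix id β')⁻¹ *ᵥ r ∧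
      d ⬝ᵥ basicSol M β' r < d ⬝ᵥ basicSol M β r := by
  have hjβ : j ∉ Set.range β := by
    rintro ⟨k, rfl⟩
    simp [edgeDir_basic hβ] at hj
  obtain ⟨i, hwi, hy, hyi⟩ := exists_ratio_test (basicSol_nonneg hr) (w := edgeDir M β j)
    (by simpa [Pi.le_def] using hw)
  obtain ⟨r₀, rfl⟩ : i ∈ Set.range β := by
    by_contra hi
    rw [edgeDir_apply_of_notMem_range hi, Pi.single_apply] at hwi
    split_ifs at hwi <;> linarith
  set θ := basicSol M β r (β r₀) / -edgeDir M β j (β r₀)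
  have hθ : 0 < θ := by
    refine div_pos (lt_of_le_of_ne (basicSol_nonneg hr _) ?_) (neg_pos.2 hwi)
    rw [basicSol_apply_basic hβ.1]
    exact (hnd r₀).symm
  have hβ' := isColBasis_update hβ hjβ hwi.ne
  have hsol : basicSol M (update β r₀ j) r = basicSol M β r + θ • edgeDir M β j := by
    refine basicSol_eq hβ' ?_ fun i hi => ?_
    · rw [mulVec_add, mulVec_smul, mulVec_edgeDir hβ, mulVec_basicSol hβ, smul_zero, add_zero]
    · by_cases hir : i = β r₀
      · rw [hir]
        exact hyi
      have hiβ : i ∉ Set.range β := by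
        rintro ⟨k, rfl⟩
        exact hi ⟨k, update_of_ne (fun h => hir (congrArg β h)) _ _⟩
      have hij : i ≠ j := fun h => hi ⟨r₀, by rw [update_self, h]⟩
      simp [basicSol_apply_of_notMem_range _ hiβ, edgeDir_apply_of_notMem_range hiβ,
        Pi.single_eq_of_ne hij]
  refine ⟨update β r₀ j, hβ', fun k => ?_, ?_⟩
  · rw [← basicSol_apply_basic hβ'.1, hsol]
    exact hy _
  · rw [hsol, dotProduct_add, dotProduct_smul, smul_eq_mul]
    linarith [mul_neg_of_pos_of_neg hθ hj]

end Pivot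

lemma eventually_perturbed_ne_zero_and_nonneg_imp (a : ℝ) {c : Fin m → ℝ} (hc : c ≠ 0) :
    ∀ᶠ ε in 𝓝[>] 0, a + ∑ k, c k * ε ^ (k + 1 : ℕ) ≠ 0 ∧
      (0 ≤ a + ∑ k, c k * ε ^ (k + 1 : ℕ) → 0 ≤ a) := by
  set P : Polynomial ℝ :=
    Polynomial.C a + ∑ k, Polynomial.C (c k) * Polynomial.X ^ (k + 1 : ℕ)
  have hP : ∀ ε, P.eval ε = a + ∑ k, c k * ε ^ (k + 1 : ℕ) := by
    simp [P, Polynomial.eval_finsetSum]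
  have hP0 : P ≠ 0 := by
    obtain ⟨k, hk⟩ := Function.ne_iff.1 hc
    intro h
    apply hk
    simpa [P, Polynomial.finsetSum_coeff, Polynomial.coeff_C, Polynomial.coeff_X_pow,
      Fin.val_inj] using congrArg (Polynomial.coeff · (k + 1 : ℕ)) h
  have hroots : ∀ᶠ ε in 𝓝[>] (0 : ℝ), P.eval ε ≠ 0 := by
    have hfin := (Polynomial.finite_setOfPred_isRoot hP0).sdiff (t := {0})
    have : ({ε | P.IsRoot ε} \ {0})ᶜ ∈ 𝓝 (0 : ℝ) :=
      hfin.isClosed.isOpen_compl.mem_nhds (by simp)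
    filter_upwards [nhdsWithin_le_nhds this, self_mem_nhdsWithin] with ε h1 h2
    exact fun h => h1 ⟨h, ne_of_gt h2⟩
  have hsign : ∀ᶠ ε in 𝓝[>] (0 : ℝ), a < 0 → P.eval ε < 0 := by
    by_cases ha : a < 0
    · have := (P.continuous.tendsto 0).eventually_lt_const (by simpa [hP] using ha)
      exact nhdsWithin_le_nhds (this.mono fun _ h _ => h)
    · exact Eventually.of_forall fun _ h => absurd h ha
  filter_upwards [hroots, hsign] with ε h1 h2
  rw [← hP]
  exact ⟨h1, fun h => not_lt.1 fun ha => (h2 ha).not_ge h⟩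

section Optimality

variable {M : Matrix (Fin m) (Fin n) ℝ}

lemma eventually_nondegenerate_perturbation {β₀ : Fin m → Fin n} (hβ₀ : IsColBasis M β₀)
    (r : Fin m → ℝ) :
    ∀ᶠ ε in 𝓝[>] 0, ∀ β, IsColBasis M β → ∀ i,
      let rε := r + M.submatrix id β₀ *ᵥ fun k => ε ^ (k + 1 : ℕ)
      ((M.submatrix id β)⁻¹ *ᵥ rε) i ≠ 0 ∧
        (0 ≤ ((M.submatrix id β)⁻¹ *ᵥ rε) i → 0 ≤ ((M.submatrix id β)⁻¹ *ᵥ r) i) := by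
  refine eventually_all.2 fun β => ?_
  by_cases hβ : IsColBasis M β
  swap
  · exact Eventually.of_forall fun _ h => absurd h hβ
  refine (eventually_all.2 fun i => ?_).mono fun ε h _ => h
  set N := (M.submatrix id β)⁻¹ * M.submatrix id β₀
  have hrow : N i ≠ 0 := by
    intro h0
    have hN : IsUnit N.det := by
      rw [det_mul]
      exact (isUnit_nonsing_inv_det _ hβ.2).mul hβ₀.2
    exact hN.ne_zero (det_eq_zero_of_row_eq_zero i fun k => congrFun h0 k)
  have hexp : ∀ ε : ℝ, ((M.submatrix id β)⁻¹ *ᵥ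
      (r + M.submatrix id β₀ *ᵥ fun k => ε ^ (k + 1 : ℕ))) i =
      ((M.submatrix id β)⁻¹ *ᵥ r) i + ∑ k, N i k * ε ^ (k + 1 : ℕ) := by
    intro ε
    rw [mulVec_add, mulVec_mulVec, Pi.add_apply]
    rfl
  simpa only [hexp] using
    eventually_perturbed_ne_zero_and_nonneg_imp (((M.submatrix id β)⁻¹ *ᵥ r) i) hrow

theorem exists_optimal_colBasis (hM : Submodule.span ℝ (Set.range M.col) = ⊤)
    {x : Fin n → ℝ} {r : Fin m → ℝ} (hx : 0 ≤ x) (hMx : M *ᵥ x = r) (d : Fin n → ℝ)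
    (hray : ∀ β j, IsColBasis M β → 0 ≤ edgeDir M β j → 0 ≤ d ⬝ᵥ edgeDir M β j) :
    ∃ β, IsColBasis M β ∧ 0 ≤ (M.submatrix id β)⁻¹ *ᵥ r ∧ ∀ j, 0 ≤ d ⬝ᵥ edgeDir M β j := by
  classical
  obtain ⟨β₀, hβ₀, hβ₀r⟩ := exists_feasible_colBasis hM hx hMx
  obtain ⟨ε, hgood, hε⟩ :=
    (eventually_nondegenerate_perturbation hβ₀ r |>.and self_mem_nhdsWithin).exists
  set rε := r + M.submatrix id β₀ *ᵥ fun k => ε ^ (k + 1 : ℕ)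
  have hβ₀ε : 0 ≤ (M.submatrix id β₀)⁻¹ *ᵥ rε := by
    rw [mulVec_add, mulVec_mulVec, nonsing_inv_mul _ hβ₀.2, one_mulVec]
    exact add_nonneg hβ₀r fun k => (pow_pos hε _).le
  obtain ⟨β, hβ, hmin⟩ := Finset.exists_min_image
    {β | IsColBasis M β ∧ 0 ≤ (M.submatrix id β)⁻¹ *ᵥ rε} (fun β => d ⬝ᵥ basicSol M β rε)
    ⟨β₀, by simpa using ⟨hβ₀, hβ₀ε⟩⟩
  simp only [Finset.mem_filter, Finset.mem_univ, true_and] at hβ hmin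
  refine ⟨β, hβ.1, fun i => (hgood β hβ.1 i).2 (hβ.2 i), fun j => ?_⟩
  by_contra! hj
  obtain ⟨β', hβ', hβ'ε, hlt⟩ := exists_pivot hβ.1 hβ.2 (fun i => (hgood β hβ.1 i).1) hj
    fun hw => hj.not_ge (hray β j hβ.1 hw)
  exact (hmin β' ⟨hβ', hβ'ε⟩).not_gt hlt

end Optimality

section IntegerProgram

lemma intCast_mulVec {ι κ : Type*} [Fintype κ] (A : Matrix ι κ ℤ) (v : κ → ℤ) :
    A.map (Int.cast : ℤ → ℝ) *ᵥ (fun j => (v j : ℝ)) = fun i => ((A *ᵥ v) i : ℝ) :=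
  funext fun i => ((Int.castRingHom ℝ).map_mulVec A v i).symm

lemma span_col_intCast_eq_top {A : Matrix (Fin m) (Fin n) ℤ} (hA : A.rank = m) :
    Submodule.span ℝ (Set.range (A.map (Int.cast : ℤ → ℝ)).col) = ⊤ := by
  obtain ⟨v, hv⟩ := exists_linearIndependent_of_le_finrank (R := ℤ)
    (M := LinearMap.range A.mulVecLin) hA.ge
  have hvℝ : LinearIndependent ℝ fun k => algebraMap ℤ ℝ ∘ (v k : Fin m → ℤ) :=
    linearIndependent_algebraMap_comp_iff.2 (hv.map' _ (Submodule.ker_subtype _))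
  rw [eq_top_iff, ← hvℝ.span_eq_top_of_card_eq_finrank' (by simp), Submodule.span_le,
    ← range_mulVecLin]
  rintro _ ⟨k, rfl⟩
  obtain ⟨x, hx⟩ := (v k).2
  refine ⟨fun j => (x j : ℝ), ?_⟩
  simp [intCast_mulVec, ← hx, Function.comp_def]

lemma intCast_det_smul_inv_mulVec {ι : Type*} [Fintype ι] [DecidableEq ι] {N : Matrix ι ι ℤ}
    (hN : IsUnit (N.map (Int.cast : ℤ → ℝ)).det) (v : ι → ℤ) :
    (N.det : ℝ) • ((N.map (Int.cast : ℤ → ℝ))⁻¹ *ᵥ fun i => (v i : ℝ)) =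
      fun i => ((N.adjugate *ᵥ v) i : ℝ) := by
  have hadj : (N.map (Int.cast : ℤ → ℝ)).adjugate = N.adjugate.map Int.cast := by
    simpa using ((Int.castRingHom ℝ).map_adjugate N).symm
  rw [Int.cast_det, det_smul_inv_mulVec_eq_cramer _ _ hN, cramer_eq_adjugate_mulVec, hadj,
    intCast_mulVec]

variable {A : Matrix (Fin m) (Fin n) ℤ} {β : Fin m → Fin n}

lemma exists_intCast_eq_det_smul_edgeDir (hβ : IsColBasis (A.map (Int.cast : ℤ → ℝ)) β)
    (j : Fin n) :
    ∃ w : Fin n → ℤ, (fun i => (w i : ℝ)) =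
      ((A.submatrix id β).det : ℝ) • edgeDir (A.map (Int.cast : ℤ → ℝ)) β j := by
  refine ⟨(A.submatrix id β).det • Pi.single j 1 -
    extend β ((A.submatrix id β).adjugate *ᵥ A.col j) 0, ?_⟩
  have hcramer : ((A.submatrix id β).det : ℝ) •
      (((A.map (Int.cast : ℤ → ℝ)).submatrix id β)⁻¹ *ᵥ (A.map (Int.cast : ℤ → ℝ)).col j) =
      fun i => (((A.submatrix id β).adjugate *ᵥ A.col j) i : ℝ) :=
    intCast_det_smul_inv_mulVec hβ.2 (A.col j)
  ext i
  by_cases hi : i ∈ Set.range β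
  · obtain ⟨k, rfl⟩ := hi
    have := congrFun hcramer k
    simp only [Pi.smul_apply, smul_eq_mul] at this
    simp [edgeDir, basicSol_apply_basic hβ.1, hβ.1.extend_apply, mul_sub, this, Pi.single_apply,
      apply_ite (Int.cast : ℤ → ℝ)]
  · simp [edgeDir_apply_of_notMem_range hi, extend_apply' _ _ _ hi, Pi.single_apply,
      apply_ite (Int.cast : ℤ → ℝ)]

lemma objZ_add (d : Fin n → ℝ) (x y : Fin n → ℤ) : objZ d (x + y) = objZ d x + objZ d y := by
  simp [objZ, mul_add, Finset.sum_add_distrib]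

lemma dotProduct_edgeDir_nonneg_of_mem_IFR_IP {b : Fin m → ℤ} {d : Fin n → ℝ} {x₀ : Fin n → ℤ}
    (hx₀ : IPfeas A b x₀) (hd : d ∈ IFR_IP A b x₀)
    (hβ : IsColBasis (A.map (Int.cast : ℤ → ℝ)) β) {j : Fin n}
    (hw : 0 ≤ edgeDir (A.map (Int.cast : ℤ → ℝ)) β j) :
    0 ≤ d ⬝ᵥ edgeDir (A.map (Int.cast : ℤ → ℝ)) β j := by
  obtain ⟨w, hw'⟩ := exists_intCast_eq_det_smul_edgeDir hβ j
  set D : ℤ := (A.submatrix id β).det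
  have hD : (D : ℝ) ≠ 0 := by
    rw [Int.cast_det]
    exact hβ.2.ne_zero
  have hcast : (fun i => ((D • w) i : ℝ)) =
      ((D : ℝ) * D) • edgeDir (A.map (Int.cast : ℤ → ℝ)) β j := by
    rw [mul_smul, ← hw']
    ext i
    simp
  have hAw : A *ᵥ (D • w) = 0 := by
    have := intCast_mulVec A (D • w)
    rw [hcast, mulVec_smul, mulVec_edgeDir hβ, smul_zero] at this
    ext i
    exact_mod_cast (congrFun this i).symm.trans (Pi.zero_apply i)
  have hfeas : IPfeas A b (x₀ + D • w) := by
    refine ⟨by rw [mulVec_add, hAw, add_zero, hx₀.1], fun i => add_nonneg (hx₀.2 i) ?_⟩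
    have := congrFun hcast i
    simp only [Pi.smul_apply, smul_eq_mul] at this ⊢
    have h : (0 : ℝ) ≤ ((D * w i : ℤ) : ℝ) := this ▸ mul_nonneg (mul_self_nonneg _) (hw i)
    exact_mod_cast h
  have hobj : objZ d (D • w) = ((D : ℝ) * D) * (d ⬝ᵥ edgeDir (A.map (Int.cast : ℤ → ℝ)) β j) := by
    rw [← smul_eq_mul, ← dotProduct_smul, ← hcast]
    rfl
  have := hd _ hfeas
  rw [objZ_add, hobj] at this
  exact nonneg_of_mul_nonneg_right (by linarith) (mul_self_pos.2 hD)

lemma redCost_eq_dotProduct_edgeDir (d : Fin n → ℝ) (hβ : Injective β) (j : Fin n) :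
    redCost A d β j = d ⬝ᵥ edgeDir (A.map (Int.cast : ℤ → ℝ)) β j := by
  rw [redCost, edgeDir, dotProduct_sub, basicSol, dotProduct_extend hβ, ← dotProduct_mulVec]
  simp only [dotProduct_single, mul_one, sub_right_inj]
  rfl

theorem exists_optBasis_of_mem_IFR_IP (hA : A.rank = m) {b : Fin m → ℤ} {d : Fin n → ℝ}
    {x₀ : Fin n → ℤ} (hx₀ : IPfeas A b x₀) (hd : d ∈ IFR_IP A b x₀) :
    ∃ β, OptBasis A b d β := by
  obtain ⟨β, hβ, hfeas, hred⟩ := exists_optimal_colBasis (span_col_intCast_eq_top hA)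
    (x := fun j => (x₀ j : ℝ)) (fun j => (Int.cast_nonneg (hx₀.2 j) : (0 : ℝ) ≤ x₀ j))
    (by rw [intCast_mulVec, hx₀.1]) d
    fun _ _ hβ hw => dotProduct_edgeDir_nonneg_of_mem_IFR_IP hx₀ hd hβ hw
  exact ⟨β, ⟨hβ.1, hβ.2, hfeas⟩, fun j => redCost_eq_dotProduct_edgeDir d hβ.1 j ▸ hred j⟩

end IntegerProgram

section InverseFeasibleRegions

variable {A : Matrix (Fin m) (Fin n) ℤ} {b : Fin m → ℤ} {x₀ : Fin n → ℤ}

lemma IFR_G_subset_IFR_IP (β : Fin m → Fin n) : IFR_G A b β x₀ ⊆ IFR_IP A b x₀ :=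
  fun _ hd x hx => hd x ⟨hx.1, fun i _ => hx.2 i⟩

lemma valIP_eq_objZ {d : Fin n → ℝ} (hx₀ : IPfeas A b x₀) (hd : d ∈ IFR_IP A b x₀) :
    valIP A b d = objZ d x₀ :=
  IsLeast.csInf_eq ⟨⟨x₀, hx₀, rfl⟩, by
    rintro _ ⟨x, hx, rfl⟩
    exact EReal.coe_le_coe_iff.2 (hd x hx)⟩

lemma mem_IFR_G_of_valIP_eq_valG {d : Fin n → ℝ} {β : Fin m → Fin n} (hx₀ : IPfeas A b x₀)
    (hd : d ∈ IFR_IP A b x₀) (hval : valIP A b d = valG A b d β) : d ∈ IFR_G A b β x₀ := by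
  intro x hx
  have : valG A b d β ≤ objZ d x := sInf_le ⟨x, hx, rfl⟩
  rwa [← hval, valIP_eq_objZ hx₀ hd, EReal.coe_le_coe_iff] at this

end InverseFeasibleRegions

lemma invVal_iUnion {ι : Type*} (S : ι → Set (Fin n → ℝ)) (c : Fin n → ℝ) :
    invVal (⋃ i, S i) c = ⨅ i, invVal (S i) c := by
  simp only [invVal, sInf_image, iInf_iUnion]

/-- Suppose `x°` is feasible for the IP, and for every `d` for which
`IP^d` has an optimal solution, every optimal basis `B̂` of `LP^d` satisfies
`val(IP^d) = val(G^{B̂,d})` (Gomory's asymptotic condition). Then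
`⋃_{B ∈ ℬ} IFR(G^B, x°) = IFR(IP, x°)`, and consequently
`min_{B ∈ ℬ} val(INV(G^B, x°)) = val(INV(IP, x°))`. -/
theorem ifr_union_gcr_eq_ifr_ip_of_asymptotic
    (A : Matrix (Fin m) (Fin n) ℤ) (b : Fin m → ℤ) (c : Fin n → ℝ)
    (hrank : A.rank = m)
    (x₀ : Fin n → ℤ) (hx₀ : IPfeas A b x₀)
    (hexact : ∀ d : Fin n → ℝ,
      (∃ x : Fin n → ℤ, IPfeas A b x ∧
        ∀ x' : Fin n → ℤ, IPfeas A b x' → objZ d x ≤ objZ d x') →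
      ∀ β : Fin m → Fin n, OptBasis A b d β → valIP A b d = valG A b d β) :
    (⋃ β ∈ {β : Fin m → Fin n | FeasBasis A b β}, IFR_G A b β x₀) = IFR_IP A b x₀ ∧
    (⨅ β : {β : Fin m → Fin n // FeasBasis A b β}, invVal (IFR_G A b β.1 x₀) c) =
      invVal (IFR_IP A b x₀) c := by
  have hunion : (⋃ β ∈ {β | FeasBasis A b β}, IFR_G A b β x₀) = IFR_IP A b x₀ := by
    refine subset_antisymm (Set.iUnion₂_subset fun β _ => IFR_G_subset_IFR_IP β) fun d hd => ?_
    obtain ⟨β, hβ⟩ := exists_optBasis_of_mem_IFR_IP hrank hx₀ hd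
    exact Set.mem_biUnion hβ.1
      (mem_IFR_G_of_valIP_eq_valG hx₀ hd (hexact d ⟨x₀, hx₀, hd⟩ β hβ))
  refine ⟨hunion, ?_⟩
  rw [← hunion, Set.biUnion_eq_iUnion, invVal_iUnion]
  rfl

end InverseGCR17
end
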